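/- arXiv:math/0607274 — 7 statements merged into one kernel-verified Lean document; each statement's English description precedes it below -/
import Mathlib

section
/- Let n ≥ 1 and k ≥ 1, let G = ℤⁿ be a finitely generated free abelian group, and let φ : G → GL_k(ℂ) be a group homomorphism. Let Λ = ℂ[G] be the complex group algebra of G (the ring of Laurent polynomials in n variables), and let Λ^k_φ denote the G-representation over ℂ whose underlying vector space is ℂ^k ⊗_ℂ Λ, with G acting by γ · (v ⊗ q) = (φ(γ)v) ⊗ (γ·q), where γ·q is multiplication in Λ by the group element γ. Then the group homology H_i(G; Λ^k_φ) vanishes for every i ≥ 1. -/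
open CategoryTheory
open scoped TensorProduct

/-!
Untwisting `v ⊗ γ ↦ γ ⊗ φ(γ)⁻¹ v` identifies `Λ^k_φ` with the induced module `ℤ[G] ⊗_ℤ ℂ^k`,
on which `G` acts on the left factor only. As `ℂ^k` is torsion-free, hence flat over `ℤ`, this
base change is flat over `ℤ[G]`, and `Tor` against a flat module vanishes in positive degrees.
-/

open Limits MonoidalCategory

universe u

theorem ModuleCat.isZero_Tor'_succ_of_flat {R : Type u} [CommRing R] (X M : ModuleCat.{u} R)
    [Module.Flat R M] (n : ℕ) : IsZero (((Tor' (ModuleCat.{u} R) (n + 1)).obj X).obj M) := by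
  let P := ProjectiveResolution.of X
  refine IsZero.of_iso ?_ (P.isoLeftDerivedObj ((tensoringRight _).obj M) (n + 1))
  exact (HomologicalComplex.exactAt_iff_isZero_homology _ _).1
    (Module.Flat.rTensor_shortComplex_exact M _ (P.complex_exactAt_succ n))

namespace Representation

variable {k G V W : Type*} [CommRing k] [Monoid G] [AddCommGroup V] [Module k V]
  [AddCommGroup W] [Module k W] [Module (MonoidAlgebra k G) W]
  [IsScalarTower k (MonoidAlgebra k G) W]

def asModuleEquivOfIntertwining (ρ : Representation k G V) (e : V ≃ₗ[k] W)
    (he : ∀ g v, e (ρ g v) = MonoidAlgebra.of k G g • e v) :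
    ρ.asModule ≃ₗ[MonoidAlgebra k G] W where
  __ := ρ.asModuleEquiv.toAddEquiv.trans e.toAddEquiv
  map_smul' r x := by
    change e (ρ.asModuleEquiv (r • x)) = r • e (ρ.asModuleEquiv x)
    rw [asModuleEquiv_map_smul]
    induction r using MonoidAlgebra.induction_on with
    | of g => rw [asAlgebraHom_of]; exact he g _
    | add r s hr hs => simp_all [add_smul]
    | smul c r hr => simp_all [smul_assoc]

noncomputable section Untwisting

variable {G K V : Type*} [Group G] [DecidableEq G] [CommRing K] [AddCommGroup V] [Module K V]
  (σ : Representation K G V)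

def untwistFinsupp : (G →₀ V) ≃ₗ[K] (G →₀ V) :=
  LinearEquiv.ofLinearMap
    (Finsupp.lsum K fun g => (Finsupp.lsingle g).comp (σ g⁻¹))
    (Finsupp.lsum K fun g => (Finsupp.lsingle g).comp (σ g))
    (Finsupp.lhom_ext fun g v => by simp)
    (Finsupp.lhom_ext fun g v => by simp)

def untwistTensor : V ⊗[K] MonoidAlgebra K G ≃+ MonoidAlgebra ℤ G ⊗[ℤ] V :=
  ((LinearEquiv.lTensor V (MonoidAlgebra.coeffLinearEquiv K)) ≪≫ₗ
    TensorProduct.finsuppScalarRight K K V G ≪≫ₗ σ.untwistFinsupp).toAddEquiv.trans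
  ((TensorProduct.finsuppScalarLeft ℤ V G).symm ≪≫ₗ
    LinearEquiv.rTensor V (MonoidAlgebra.coeffLinearEquiv ℤ).symm).toAddEquiv

theorem untwistTensor_tmul_single (v : V) (g : G) (c : K) :
    σ.untwistTensor (v ⊗ₜ MonoidAlgebra.single g c) =
      MonoidAlgebra.single g 1 ⊗ₜ (c • σ g⁻¹ v) := by
  simp [untwistTensor, untwistFinsupp, TensorProduct.finsuppScalarRight_apply_tmul]

theorem untwistTensor_map_rho (ρ : Representation ℤ G (V ⊗[K] MonoidAlgebra K G))
    (hρ : ∀ g v q, ρ g (v ⊗ₜ q) = σ g v ⊗ₜ (MonoidAlgebra.of K G g * q)) (g : G)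
    (x : V ⊗[K] MonoidAlgebra K G) :
    σ.untwistTensor (ρ g x) = MonoidAlgebra.of ℤ G g • σ.untwistTensor x := by
  induction x using TensorProduct.induction_on with
  | zero => simp
  | add x y hx hy => simp only [map_add, hx, hy, smul_add]
  | tmul v q =>
    induction q using MonoidAlgebra.induction_linear with
    | zero => simp
    | add p q hp hq => simp only [TensorProduct.tmul_add, map_add, hp, hq, smul_add]
    | single h c =>
      simp [hρ, untwistTensor_tmul_single, MonoidAlgebra.single_mul_single,
        TensorProduct.smul_tmul']

def asModuleEquivInduced (ρ : Representation ℤ G (V ⊗[K] MonoidAlgebra K G))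
    (hρ : ∀ g v q, ρ g (v ⊗ₜ q) = σ g v ⊗ₜ (MonoidAlgebra.of K G g * q)) :
    ρ.asModule ≃ₗ[MonoidAlgebra ℤ G] MonoidAlgebra ℤ G ⊗[ℤ] V :=
  ρ.asModuleEquivOfIntertwining σ.untwistTensor.toIntLinearEquiv (σ.untwistTensor_map_rho ρ hρ)

end Untwisting

theorem flat_asModule_of_twisted {G K V : Type*} [CommGroup G] [CommRing K] [AddCommGroup V]
    [Module K V] [Module.Flat ℤ V] (σ : Representation K G V)
    (ρ : Representation ℤ G (V ⊗[K] MonoidAlgebra K G))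
    (hρ : ∀ g v q, ρ g (v ⊗ₜ q) = σ g v ⊗ₜ (MonoidAlgebra.of K G g * q)) :
    Module.Flat (MonoidAlgebra ℤ G) ρ.asModule := by
  classical
  exact .of_linearEquiv (σ.asModuleEquivInduced ρ hρ)

end Representation

theorem boundary_manifold_stmt0_general
    (n k : ℕ)
    (φ : Multiplicative (Fin n → ℤ) →* Matrix.GeneralLinearGroup (Fin k) ℂ)
    (ρ : Representation ℤ (Multiplicative (Fin n → ℤ))
      ((Fin k → ℂ) ⊗[ℂ] MonoidAlgebra ℂ (Multiplicative (Fin n → ℤ))))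
    (hρ : ∀ (γ : Multiplicative (Fin n → ℤ)) (v : Fin k → ℂ)
      (q : MonoidAlgebra ℂ (Multiplicative (Fin n → ℤ))),
      ρ γ (v ⊗ₜ[ℂ] q) =
        (Matrix.mulVec (φ γ : Matrix (Fin k) (Fin k) ℂ) v) ⊗ₜ[ℂ]
          (MonoidAlgebra.of ℂ (Multiplicative (Fin n → ℤ)) γ * q))
    (i : ℕ) (hi : 1 ≤ i) :
    Limits.IsZero
      (((Tor' (ModuleCat (MonoidAlgebra ℤ (Multiplicative (Fin n → ℤ)))) i).obj
        (ModuleCat.of (MonoidAlgebra ℤ (Multiplicative (Fin n → ℤ)))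
          (Representation.trivial ℤ (G := Multiplicative (Fin n → ℤ)) (V := ℤ)).asModule)).obj
        (ModuleCat.of (MonoidAlgebra ℤ (Multiplicative (Fin n → ℤ))) ρ.asModule)) := by
  let σ : Representation ℂ (Multiplicative (Fin n → ℤ)) (Fin k → ℂ) :=
    (Units.coeHom _).comp (Matrix.GeneralLinearGroup.toLin.toMonoidHom.comp φ)
  have := Representation.flat_asModule_of_twisted σ ρ (fun γ v q => by simpa [σ] using hρ γ v q)
  obtain ⟨m, rfl⟩ := Nat.exists_eq_add_of_le' hi
  exact ModuleCat.isZero_Tor'_succ_of_flat _ _ m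

/-- Let `G = ℤⁿ` (`n ≥ 1`), `k ≥ 1`, and let `φ : G → GL_k(ℂ)` be a
group homomorphism.  Let `Λ = ℂ[G]` be the complex group algebra, and let `Λ^k_φ` be the
`G`-representation with underlying vector space `ℂ^k ⊗_ℂ Λ` and action
`γ · (v ⊗ q) = (φ(γ) v) ⊗ (γ · q)`.  Then the group homology `H_i(G; Λ^k_φ)`, i.e. the
`i`-th left derived functor of `(- ⊗_{ℤG} Λ^k_φ)` evaluated at the trivial module `ℤ`
(which is computed by a free resolution `C_*(G)` of `ℤ` over `ℤG` tensored with `Λ^k_φ`),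
vanishes for every `i ≥ 1`. -/
theorem boundary_manifold_stmt0
    (n k : ℕ) (hn : 1 ≤ n) (hk : 1 ≤ k)
    (φ : Multiplicative (Fin n → ℤ) →* Matrix.GeneralLinearGroup (Fin k) ℂ)
    (ρ : Representation ℤ (Multiplicative (Fin n → ℤ))
      ((Fin k → ℂ) ⊗[ℂ] MonoidAlgebra ℂ (Multiplicative (Fin n → ℤ))))
    (hρ : ∀ (γ : Multiplicative (Fin n → ℤ)) (v : Fin k → ℂ)
      (q : MonoidAlgebra ℂ (Multiplicative (Fin n → ℤ))),
      ρ γ (v ⊗ₜ[ℂ] q) =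
        (Matrix.mulVec (φ γ : Matrix (Fin k) (Fin k) ℂ) v) ⊗ₜ[ℂ]
          (MonoidAlgebra.of ℂ (Multiplicative (Fin n → ℤ)) γ * q))
    (i : ℕ) (hi : 1 ≤ i) :
    Limits.IsZero
      (((Tor' (ModuleCat (MonoidAlgebra ℤ (Multiplicative (Fin n → ℤ)))) i).obj
        (ModuleCat.of (MonoidAlgebra ℤ (Multiplicative (Fin n → ℤ)))
          (Representation.trivial ℤ (G := Multiplicative (Fin n → ℤ)) (V := ℤ)).asModule)).obj
        (ModuleCat.of (MonoidAlgebra ℤ (Multiplicative (Fin n → ℤ))) ρ.asModule)) :=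
  boundary_manifold_stmt0_general n k φ ρ hρ i hi
end

section
/- Let n ≥ 2 and k ≥ 1, let Λ = ℂ[t_1^{±1}, …, t_n^{±1}] be the Laurent polynomial ring in n variables, and let A_1, …, A_n ∈ GL_k(ℂ) be pairwise commuting invertible matrices. Let P be the k × (nk) matrix over Λ obtained by concatenating the blocks t_1·A_1 − I_k, t_2·A_2 − I_k, …, t_n·A_n − I_k. If an element c ∈ Λ divides every k × k minor of P, then c is a unit of Λ. (Equivalently, the smallest principal ideal of Λ containing the ideal generated by all k × k minors of P is the unit ideal.) -/
/-!
Up to sign, the block minor `det (t_l A_l - I)` is the reversed characteristic polynomial of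
`A_l` in the variable `t_l`; it is nonzero because its constant term is `1`. For every
coordinate `i ≠ l`, both the top and the bottom `t_i`-degree are additive on the domain
`ℂ[ℤⁿ]` and vanish on this minor, so the `i`-th exponent is constant on the support of any
divisor `c`. As `n ≥ 2`, every coordinate has such an `l`: `c` is a monomial, hence a unit.
-/

open Polynomial

namespace AddMonoidAlgebra

section Degree

variable {R A B : Type*} [Semiring R] [AddCommMonoid A] {D : A → B}

theorem ne_zero_of_mem_support {p : R[A]} {a : A} (ha : a ∈ p.coeff.support) : p ≠ 0 := by
  rintro rfl
  simp at ha

theorem coeff_mul_eq_zero_of_forall_add_lt [Add B] [Preorder B]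
    (hD : ∀ a₁ a₂, D (a₁ + a₂) = D a₁ + D a₂) {p q : R[A]} {z : A}
    (h : ∀ x ∈ p.coeff.support, ∀ y ∈ q.coeff.support, D x + D y < D z) :
    (p * q).coeff z = 0 := by
  classical
  refine Finsupp.notMem_support_iff.mp fun hz => ?_
  obtain ⟨x, hx, y, hy, rfl⟩ := Finset.mem_add.mp (support_coeff_mul_subset p q hz)
  exact (h x hx y hy).ne (hD x y).symm

theorem exists_eq_add_of_forall_le [PartialOrder B] {p : R[A]} {a : A}
    (ha : a ∈ p.coeff.support) (hmax : ∀ x ∈ p.coeff.support, D x ≤ D a) :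
    ∃ p₀ p₁ : R[A], p = p₀ + p₁ ∧ a ∈ p₀.coeff.support ∧
      (∀ x ∈ p₀.coeff.support, D x = D a) ∧ ∀ x ∈ p₁.coeff.support, D x < D a := by
  classical
  refine ⟨ofCoeff (p.coeff.filter (D · = D a)), ofCoeff (p.coeff.filter (D · ≠ D a)),
    coeff_injective (Finsupp.filter_add_filter_not p.coeff _).symm, ?_, ?_, ?_⟩
  · simpa [Finsupp.support_filter] using ha
  · intro x hx
    simp only [Finsupp.support_filter, Finset.mem_filter] at hx
    exact hx.2
  · intro x hx
    simp only [Finsupp.support_filter, Finset.mem_filter] at hx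
    exact (hmax x hx.1).lt_of_ne hx.2

variable [AddCommMonoid B] [LinearOrder B] [IsOrderedCancelAddMonoid B] [NoZeroDivisors R[A]]

theorem exists_mem_support_coeff_mul_of_forall_le
    (hD : ∀ a₁ a₂, D (a₁ + a₂) = D a₁ + D a₂) {p q : R[A]} {a b : A}
    (ha : a ∈ p.coeff.support) (hb : b ∈ q.coeff.support)
    (hpa : ∀ x ∈ p.coeff.support, D x ≤ D a) (hqb : ∀ y ∈ q.coeff.support, D y ≤ D b) :
    ∃ z ∈ (p * q).coeff.support, D z = D a + D b := by
  classical
  obtain ⟨p₀, p₁, rfl, ha₀, hp₀, hp₁⟩ := exists_eq_add_of_forall_le ha hpa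
  obtain ⟨q₀, q₁, hq, hb₀, hq₀, hq₁⟩ := exists_eq_add_of_forall_le hb hqb
  have hne : p₀ * q₀ ≠ 0 :=
    mul_ne_zero (ne_zero_of_mem_support ha₀) (ne_zero_of_mem_support hb₀)
  obtain ⟨z, hz⟩ := Finsupp.support_nonempty_iff.mpr (coeff_eq_zero.not.mpr hne)
  have hDz : D z = D a + D b := by
    obtain ⟨x, hx, y, hy, rfl⟩ := Finset.mem_add.mp (support_coeff_mul_subset p₀ q₀ hz)
    rw [hD, hp₀ x hx, hq₀ y hy]
  refine ⟨z, ?_, hDz⟩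
  have h₀₁ : (p₀ * q₁).coeff z = 0 :=
    coeff_mul_eq_zero_of_forall_add_lt hD fun x hx y hy => by
      rw [hDz, hp₀ x hx]
      exact add_lt_add_right (hq₁ y hy) _
  have h₁ : (p₁ * q).coeff z = 0 :=
    coeff_mul_eq_zero_of_forall_add_lt hD fun x hx y hy => by
      rw [hDz]
      exact add_lt_add_of_lt_of_le (hp₁ x hx) (hqb y hy)
  rw [Finsupp.mem_support_iff, add_mul, hq, mul_add, ← hq, coeff_add, coeff_add,
    Finsupp.add_apply, Finsupp.add_apply, h₀₁, h₁, add_zero, add_zero]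
  exact Finsupp.mem_support_iff.mp hz

/-- The top and the bottom `D`-degree are both additive; for `p * q` they coincide, so they
coincide for `p`. -/
theorem eq_of_mem_support_of_forall_mem_support_mul_eq
    (hD : ∀ a₁ a₂, D (a₁ + a₂) = D a₁ + D a₂) {p q : R[A]} (hpq : p * q ≠ 0) {e : B}
    (he : ∀ z ∈ (p * q).coeff.support, D z = e) {x y : A}
    (hx : x ∈ p.coeff.support) (hy : y ∈ p.coeff.support) : D x = D y := by
  have hp := Finsupp.support_nonempty_iff.mpr (coeff_eq_zero.not.mpr (left_ne_zero_of_mul hpq))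
  have hq := Finsupp.support_nonempty_iff.mpr (coeff_eq_zero.not.mpr (right_ne_zero_of_mul hpq))
  obtain ⟨a, ha, hamax⟩ := p.coeff.support.exists_max_image D hp
  obtain ⟨a', ha', hamin⟩ := p.coeff.support.exists_min_image D hp
  obtain ⟨b, hb, hbmax⟩ := q.coeff.support.exists_max_image D hq
  obtain ⟨b', hb', hbmin⟩ := q.coeff.support.exists_min_image D hq
  obtain ⟨z, hz, hDz⟩ := exists_mem_support_coeff_mul_of_forall_le hD ha hb hamax hbmax
  obtain ⟨z', hz', hDz'⟩ :=
    exists_mem_support_coeff_mul_of_forall_le (B := Bᵒᵈ) hD ha' hb' hamin hbmin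
  have : D a' = D a := ((add_eq_add_iff_eq_and_eq (hamax a' ha') (hbmax b' hb')).mp
    (hDz'.symm.trans ((he z' hz').trans ((he z hz).symm.trans hDz)))).1
  exact le_antisymm ((hamax x hx).trans (this ▸ hamin y hy))
    ((hamax y hy).trans (this ▸ hamin x hx))

end Degree

section Laurent

variable {R ι : Type*} [Semiring R] [DecidableEq ι]

variable (R) in
/-- `X ↦ t_l`. -/
noncomputable def axisHom (l : ι) : R[X] →+* R[ι → ℤ] :=
  (mapDomainRingHom R (AddMonoidHom.single (fun _ => ℤ) l)).comp toLaurent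

theorem axisHom_injective (l : ι) : Function.Injective (axisHom R l) :=
  (mapDomain_injective (Pi.single_injective l)).comp toLaurent_injective

@[simp] theorem axisHom_X (l : ι) : axisHom R l X = single (Pi.single l 1) 1 := by
  rw [axisHom, RingHom.comp_apply, toLaurent_X, LaurentPolynomial.T, mapDomainRingHom_apply,
    mapDomain_single]
  rfl

@[simp] theorem axisHom_C (l : ι) (r : R) : axisHom R l (C r) = single 0 r := by
  rw [axisHom, RingHom.comp_apply, toLaurent_C, ← LaurentPolynomial.single_eq_C,
    mapDomainRingHom_apply, mapDomain_single, map_zero]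

theorem eq_zero_of_mem_support_axisHom {l : ι} {p : R[X]} {a : ι → ℤ}
    (ha : a ∈ (axisHom R l p).coeff.support) {i : ι} (hi : i ≠ l) : a i = 0 := by
  classical
  obtain ⟨m, -, rfl⟩ := Finset.mem_image.mp (Finsupp.mapDomain_support ha)
  exact Pi.single_eq_of_ne hi _

end Laurent

theorem det_map_single_sub_one {R ι n : Type*} [CommRing R] [DecidableEq ι] [Fintype n]
    [DecidableEq n] (M : Matrix n n R) (l : ι) :
    (M.map (single (Pi.single l (1 : ℤ))) - 1 : Matrix n n R[ι → ℤ]).det =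
      (-1) ^ Fintype.card n * axisHom R l M.charpolyRev := by
  have : (M.map (single (Pi.single l (1 : ℤ))) - 1 : Matrix n n R[ι → ℤ]) =
      -(1 - (X : R[X]) • M.map C).map (axisHom R l) := by
    ext i j
    simp [Matrix.one_apply, single_mul_single, apply_ite]
  rw [this, Matrix.det_neg, Matrix.charpolyRev, RingHom.map_det]
  rfl


section Units

theorem isUnit_single {K A : Type*} [Field K] [AddCommGroup A] (a : A) {r : K} (hr : r ≠ 0) :
    IsUnit (single a r) :=
  IsUnit.of_mul_eq_one (single (-a) r⁻¹) <| by
    rw [single_mul_single, add_neg_cancel, mul_inv_cancel₀ hr, one_def]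

theorem isUnit_of_coeff_support_subsingleton {K A : Type*} [Field K] [AddCommGroup A] {c : K[A]}
    (hc : c ≠ 0) (h : (c.coeff.support : Set A).Subsingleton) : IsUnit c := by
  obtain ⟨a, ha⟩ := Finsupp.support_nonempty_iff.mpr (coeff_eq_zero.not.mpr hc)
  have hsingle : c = single a (c.coeff a) :=
    coeff_injective (Finsupp.support_subset_singleton.mp fun b hb =>
      Finset.mem_singleton.mpr (h hb ha))
  rw [hsingle]
  exact isUnit_single a (Finsupp.mem_support_iff.mp ha)

theorem coeff_support_subsingleton_of_forall_dvd {R ι : Type*} [Semiring R]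
    [NoZeroDivisors R[ι → ℤ]] {c : R[ι → ℤ]}
    (h : ∀ i, ∃ f : R[ι → ℤ], f ≠ 0 ∧ c ∣ f ∧ ∀ a ∈ f.coeff.support, a i = 0) :
    (c.coeff.support : Set (ι → ℤ)).Subsingleton := by
  intro a ha b hb
  funext i
  obtain ⟨f, hf, ⟨d, rfl⟩, hfi⟩ := h i
  exact eq_of_mem_support_of_forall_mem_support_mul_eq (D := fun a => a i) (fun _ _ => rfl)
    hf hfi ha hb

end Units

end AddMonoidAlgebra

open AddMonoidAlgebra

theorem boundary_manifold_stmt1_general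
    (n k : ℕ) (hn : 2 ≤ n)
    (A : Fin n → Matrix (Fin k) (Fin k) ℂ)
    (P : Matrix (Fin k) (Fin n × Fin k) (AddMonoidAlgebra ℂ (Fin n → ℤ)))
    (hP : ∀ (i : Fin k) (l : Fin n) (j : Fin k),
      P i (l, j) =
        AddMonoidAlgebra.single (Pi.single l (1 : ℤ)) (A l i j)
          - if i = j then 1 else 0)
    (c : AddMonoidAlgebra ℂ (Fin n → ℤ))
    (hc : ∀ s : Fin k → Fin n × Fin k,
      c ∣ Matrix.det (Matrix.of fun i j => P i (s j))) :
    IsUnit c := by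
  have : Nontrivial (Fin n) := Fin.nontrivial_iff_two_le.mpr hn
  set f : Fin n → AddMonoidAlgebra ℂ (Fin n → ℤ) := fun l => axisHom ℂ l (A l).charpolyRev
  have hf : ∀ l, f l ≠ 0 := fun l =>
    (map_ne_zero_iff _ (axisHom_injective l)).mpr fun h => by
      simpa [h] using Matrix.eval_charpolyRev (M := A l)
  have hdvd : ∀ l, c ∣ f l := fun l => by
    have hblock :
        Matrix.of (fun i j => P i (l, j)) = (A l).map (single (Pi.single l 1)) - 1 := by
      ext i j
      simp [hP, Matrix.one_apply]
    have := hc fun j => (l, j)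
    rwa [hblock, det_map_single_sub_one, (isUnit_neg_one.pow _).dvd_mul_left] at this
  have hc0 : c ≠ 0 := fun h => hf ⟨0, by omega⟩ (zero_dvd_iff.mp (h ▸ hdvd _))
  refine isUnit_of_coeff_support_subsingleton hc0
    (coeff_support_subsingleton_of_forall_dvd fun i => ?_)
  obtain ⟨l, hl⟩ := exists_ne i
  exact ⟨f l, hf l, hdvd l, fun a ha => eq_zero_of_mem_support_axisHom ha hl.symm⟩

/-- Let `n ≥ 2`, `k ≥ 1`, let `Λ = ℂ[t₁^{±1},…,tₙ^{±1}]` be the Laurent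
polynomial ring in `n` variables (the group algebra of `ℤⁿ` over `ℂ`), and let
`A₁,…,Aₙ ∈ GL_k(ℂ)` be pairwise commuting invertible matrices.  Let `P` be the
`k × (nk)` matrix over `Λ` obtained by concatenating the blocks `t_l · A_l − I_k`.
If `c ∈ Λ` divides every `k × k` minor of `P`, then `c` is a unit of `Λ`. -/
theorem boundary_manifold_stmt1
    (n k : ℕ) (hn : 2 ≤ n) (hk : 1 ≤ k)
    (A : Fin n → Matrix (Fin k) (Fin k) ℂ)
    (hA : ∀ l, IsUnit (A l))
    (hcomm : ∀ l l', A l * A l' = A l' * A l)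
    (P : Matrix (Fin k) (Fin n × Fin k) (AddMonoidAlgebra ℂ (Fin n → ℤ)))
    (hP : ∀ (i : Fin k) (l : Fin n) (j : Fin k),
      P i (l, j) =
        AddMonoidAlgebra.single (Pi.single l (1 : ℤ)) (A l i j)
          - if i = j then 1 else 0)
    (c : AddMonoidAlgebra ℂ (Fin n → ℤ))
    (hc : ∀ s : Fin k → Fin n × Fin k,
      c ∣ Matrix.det (Matrix.of fun i j => P i (s j))) :
    IsUnit c :=
  boundary_manifold_stmt1_general n k hn A P hP c hc
end

section
/- Let n ≥ 1, k ≥ 1, j ≥ 1, let v_1, …, v_j ∈ ℤⁿ be nonzero integer vectors, let d_1, …, d_j be positive integers, and let p_1, …, p_j ∈ ℂ[z] be monic polynomials of degree k with p_i(0) ≠ 0 for all i. In the Laurent polynomial ring ℂ[t_1^{±1}, …, t_n^{±1}], write t^v for the monomial with exponent vector v ∈ ℤⁿ, and set Δ = ∏_{i=1}^{j} (t^{v_i} − 1)^{d_i} and Δ^φ = ∏_{i=1}^{j} p_i(t^{v_i})^{d_i}. Then, regarding the supports (sets of exponent vectors with nonzero coefficient) as subsets of ℝⁿ, the convex hull of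 the support of Δ^φ equals k times the convex hull of the support of Δ: conv(supp Δ^φ) = k · conv(supp Δ). In particular, both convex hulls are the zonotopes determined by the matrices with columns k·d_i·v_i and d_i·v_i, respectively. -/
/-!
Newton polytopes are additive over a domain (Ostrowski): an extreme point of a Minkowski sum
`P + Q` decomposes uniquely as `a + b`, with `a`, `b` extreme in `P`, `Q`, so the coefficient of
`f * g` at a vertex of `NP f + NP g` is a product of two nonzero coefficients, and Krein–Milman
gives `NP f + NP g ⊆ NP (f * g)`. The Newton polytope of `q(t^v)` with `q(0) ≠ 0` is the segment
from `0` to `(deg q) • v`. As `t^v - 1 = q(t^v)` for `q = X - 1`, each factor `pᵢ(t^{vᵢ})^{dᵢ}`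
contributes `k` times the segment contributed by `(t^{vᵢ} - 1)^{dᵢ}`.
-/

open scoped Pointwise

/-- The Laurent polynomial ring in `n` variables over `ℂ`. -/
abbrev LaurentRing3 (n : ℕ) := AddMonoidAlgebra ℂ (Fin n → ℤ)

open AddMonoidAlgebra Polynomial

section Minkowski

variable {𝕜 E : Type*} [Field 𝕜] [LinearOrder 𝕜] [IsStrictOrderedRing 𝕜] [AddCommGroup E]
  [Module 𝕜 E] {A B : Set E}

theorem eq_and_eq_of_add_mem_extremePoints_add {a a' b b' : E} (ha : a ∈ A) (ha' : a' ∈ A)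
    (hb : b ∈ B) (hb' : b' ∈ B) (hx : a + b ∈ (A + B).extremePoints 𝕜) (h : a' + b' = a + b) :
    a' = a ∧ b' = b := by
  have hmid : a + b ∈ openSegment 𝕜 (a + b') (a' + b) := by
    refine ⟨1 / 2, 1 / 2, by norm_num, by norm_num, by norm_num, ?_⟩
    linear_combination (norm := module) (1 / 2 : 𝕜) • h
  obtain ⟨h₁, h₂⟩ := (mem_extremePoints.1 hx).2 _ (Set.add_mem_add ha hb') _
    (Set.add_mem_add ha' hb) hmid
  exact ⟨add_right_cancel h₂, add_left_cancel h₁⟩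

theorem extremePoints_add_subset :
    (A + B).extremePoints 𝕜 ⊆ A.extremePoints 𝕜 + B.extremePoints 𝕜 := by
  rintro _ hx
  obtain ⟨a, ha, b, hb, rfl⟩ := hx.1
  refine Set.add_mem_add ⟨ha, fun a₁ ha₁ a₂ ha₂ hs ↦ ?_⟩ ⟨hb, fun b₁ hb₁ b₂ hb₂ hs ↦ ?_⟩
  · rw [← mem_openSegment_translate 𝕜 b, add_comm b, add_comm b, add_comm b] at hs
    exact add_right_cancel (hx.2 (Set.add_mem_add ha₁ hb) (Set.add_mem_add ha₂ hb) hs)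
  · rw [← mem_openSegment_translate 𝕜 a] at hs
    exact add_left_cancel (hx.2 (Set.add_mem_add ha hb₁) (Set.add_mem_add ha hb₂) hs)

end Minkowski

section Segment

variable {E : Type*} [AddCommGroup E] [Module ℝ E]

theorem smul_segment_zero (N : ℝ) (x : E) : N • segment ℝ 0 x = segment ℝ 0 (N • x) := by
  rw [← Set.image_smul]
  exact image_segment ℝ (LinearMap.lsmul ℝ E N).toAffineMap 0 x |>.trans (by simp)

theorem convexHull_image_smul_eq_smul_segment (x : E) {s : Set ℝ} {N : ℝ} (h0 : 0 ∈ s)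
    (hN : N ∈ s) (hs : s ⊆ Set.Icc 0 N) : convexHull ℝ ((· • x) '' s) = N • segment ℝ 0 x := by
  have hull_s : convexHull ℝ s = segment ℝ 0 N :=
    (convexHull_min (by rwa [segment_eq_Icc (hs hN).1]) (convex_segment 0 N)).antisymm
      (segment_subset_convexHull h0 hN)
  calc convexHull ℝ ((· • x) '' s)
      = LinearMap.toSpanSingleton ℝ E x '' convexHull ℝ s :=
        (LinearMap.image_convexHull (LinearMap.toSpanSingleton ℝ E x) s).symm
    _ = segment ℝ 0 (N • x) := by
      rw [hull_s, ← LinearMap.coe_toAffineMap, image_segment]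
      simp
    _ = N • segment ℝ 0 x := (smul_segment_zero N x).symm

end Segment

theorem convexHull_subset_convexHull_of_extremePoints_subset {E : Type*} [AddCommGroup E]
    [Module ℝ E] [TopologicalSpace E] [T2Space E] [IsTopologicalAddGroup E] [ContinuousSMul ℝ E]
    [LocallyConvexSpace ℝ E] {S T : Set E} (hS : S.Finite) (hT : T.Finite)
    (h : (convexHull ℝ S).extremePoints ℝ ⊆ T) : convexHull ℝ S ⊆ convexHull ℝ T := by
  rw [← closure_convexHull_extremePoints (hS.isCompact_convexHull ℝ) (convex_convexHull ℝ S)]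
  exact closure_minimal (convexHull_min (h.trans (subset_convexHull ℝ T)) (convex_convexHull ℝ T))
    (hT.isCompact_convexHull ℝ).isClosed

theorem coeff_aeval_single {R M : Type*} [CommSemiring R] [AddCommMonoid M] (v : M) (p : R[X]) :
    (aeval (single v 1 : R[M]) p).coeff = Finsupp.mapDomain (· • v) p.toFinsupp.coeff := by
  induction p using Polynomial.induction_on' with
  | add p q hp hq => simp [hp, hq, Finsupp.mapDomain_add]
  | monomial m a => simp [single_pow, ← C_mul_X_pow_eq_monomial]

section NewtonPolytope

variable {R M E : Type*} [AddCommGroup E] [Module ℝ E]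

noncomputable def newtonPolytope [Semiring R] [AddMonoid M] (φ : M →+ E) (f : R[M]) : Set E :=
  convexHull ℝ (φ '' f.coeff.support)

theorem newtonPolytope_one [Semiring R] [Nontrivial R] [AddMonoid M] (φ : M →+ E) :
    newtonPolytope φ (1 : R[M]) = {0} := by
  simp [newtonPolytope, support_coeff_one]

theorem newtonPolytope_aeval_single [CommSemiring R] [AddCommMonoid M] {φ : M →+ E}
    (hφ : Function.Injective φ) {v : M} (hv : v ≠ 0) {p : R[X]}
    (hp : p.coeff 0 ≠ 0) :
    newtonPolytope φ (aeval (single v 1 : R[M]) p) = (p.natDegree : ℝ) • segment ℝ 0 (φ v) := by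
  classical
  have hφv : φ v ≠ 0 := (map_ne_zero_iff φ hφ).2 hv
  have hφ_nsmul (m : ℕ) : φ (m • v) = (m : ℝ) • φ v := by rw [map_nsmul, Nat.cast_smul_eq_nsmul]
  have hinj : Function.Injective (· • v : ℕ → M) := fun m m' h ↦ by
    have := congrArg φ h
    rw [hφ_nsmul, hφ_nsmul] at this
    exact_mod_cast smul_left_injective ℝ hφv this
  have hp0 : p ≠ 0 := fun h ↦ hp (by simp [h])
  rw [newtonPolytope, coeff_aeval_single, Finsupp.mapDomain_support_of_injective hinj,
    support_toFinsupp, Finset.coe_image, Set.image_image]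
  simp_rw [hφ_nsmul]
  rw [← Set.image_image (· • φ v) Nat.cast]
  refine convexHull_image_smul_eq_smul_segment (φ v) ⟨0, mem_support_iff.2 hp, Nat.cast_zero⟩
    ⟨_, natDegree_mem_support_of_nonzero hp0, rfl⟩ ?_
  rintro _ ⟨m, hm, rfl⟩
  exact ⟨m.cast_nonneg, Nat.cast_le.2 (le_natDegree_of_mem_supp m hm)⟩

variable [TopologicalSpace E] [T2Space E] [IsTopologicalAddGroup E] [ContinuousSMul ℝ E]
  [LocallyConvexSpace ℝ E]

theorem newtonPolytope_mul [Semiring R] [NoZeroDivisors R] [AddMonoid M] {φ : M →+ E}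
    (hφ : Function.Injective φ) (f g : R[M]) :
    newtonPolytope φ (f * g) = newtonPolytope φ f + newtonPolytope φ g := by
  classical
  have hfin (h : R[M]) : (φ '' h.coeff.support).Finite := h.coeff.support.finite_toSet.image φ
  rw [newtonPolytope, newtonPolytope, newtonPolytope, ← convexHull_add]
  refine (convexHull_mono ?_).antisymm ?_
  · rw [← Set.image_add]
    exact Set.image_mono (mod_cast support_coeff_mul_subset f g)
  refine convexHull_subset_convexHull_of_extremePoints_subset ((hfin f).add (hfin g)) (hfin _) ?_
  intro x hx
  rw [convexHull_add] at hx
  obtain ⟨_, ha, _, hb, rfl⟩ := extremePoints_add_subset hx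
  obtain ⟨a, ha₀, rfl⟩ := extremePoints_convexHull_subset ha
  obtain ⟨b, hb₀, rfl⟩ := extremePoints_convexHull_subset hb
  have huniq : UniqueAdd f.coeff.support g.coeff.support a b := by
    intro a' b' ha' hb' hab
    have hull {h : R[M]} {m : M} (hm : m ∈ h.coeff.support) :
        φ m ∈ convexHull ℝ (φ '' h.coeff.support) :=
      subset_convexHull ℝ _ (Set.mem_image_of_mem φ hm)
    obtain ⟨h₁, h₂⟩ := eq_and_eq_of_add_mem_extremePoints_add (hull ha₀) (hull ha') (hull hb₀)
      (hull hb') hx (by rw [← map_add, ← map_add, hab])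
    exact ⟨hφ h₁, hφ h₂⟩
  refine ⟨a + b, ?_, map_add φ a b⟩
  rw [Finset.mem_coe, Finsupp.mem_support_iff, coeff_mul_add_of_uniqueAdd huniq]
  exact mul_ne_zero (Finsupp.mem_support_iff.1 ha₀) (Finsupp.mem_support_iff.1 hb₀)

variable [CommSemiring R] [NoZeroDivisors R] [Nontrivial R] [AddCommMonoid M] {φ : M →+ E}

theorem newtonPolytope_prod (hφ : Function.Injective φ) {ι : Type*} (s : Finset ι)
    (f : ι → R[M]) : newtonPolytope φ (∏ i ∈ s, f i) = ∑ i ∈ s, newtonPolytope φ (f i) := by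
  classical
  induction s using Finset.cons_induction with
  | empty => rw [Finset.prod_empty, Finset.sum_empty, newtonPolytope_one, Set.singleton_zero]
  | cons i s hi ih => rw [Finset.prod_cons, Finset.sum_cons, newtonPolytope_mul hφ, ih]

theorem newtonPolytope_pow (hφ : Function.Injective φ) {f : R[M]}
    (hf : (newtonPolytope φ f).Nonempty) (d : ℕ) :
    newtonPolytope φ (f ^ d) = (d : ℝ) • newtonPolytope φ f := by
  have hconv : Convex ℝ (newtonPolytope φ f) := convex_convexHull ℝ _
  induction d with
  | zero =>
    rw [pow_zero, newtonPolytope_one, Nat.cast_zero, Set.zero_smul_set hf, Set.singleton_zero]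
  | succ d ih =>
    rw [pow_succ, newtonPolytope_mul hφ, ih, Nat.cast_succ,
      hconv.add_smul d.cast_nonneg zero_le_one, one_smul]

theorem newtonPolytope_aeval_single_pow (hφ : Function.Injective φ) {v : M} (hv : v ≠ 0)
    {p : R[X]} (hp : p.coeff 0 ≠ 0) (d : ℕ) :
    newtonPolytope φ ((aeval (single v 1 : R[M]) p) ^ d)
      = ((d : ℝ) * p.natDegree) • segment ℝ 0 (φ v) := by
  have h := newtonPolytope_aeval_single hφ hv hp
  rw [newtonPolytope_pow hφ (h ▸ ⟨0, Set.zero_mem_smul_set (left_mem_segment ℝ 0 _)⟩), h,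
    smul_smul]

end NewtonPolytope

theorem boundary_manifold_stmt3_general
    (n k j : ℕ)
    (v : Fin j → (Fin n → ℤ)) (hv : ∀ i, v i ≠ 0)
    (d : Fin j → ℕ)
    (p : Fin j → Polynomial ℂ)
    (hdeg : ∀ i, (p i).natDegree = k)
    (h0 : ∀ i, (p i).eval 0 ≠ 0) :
    convexHull ℝ
      ((fun (w : Fin n → ℤ) (i : Fin n) => (w i : ℝ)) ''
        ↑(∏ i : Fin j,
          (Polynomial.aeval
            (AddMonoidAlgebra.single (v i) (1 : ℂ) : LaurentRing3 n) (p i)) ^ d i).coeff.support)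
    = (k : ℝ) • convexHull ℝ
      ((fun (w : Fin n → ℤ) (i : Fin n) => (w i : ℝ)) ''
        ↑(∏ i : Fin j,
          ((AddMonoidAlgebra.single (v i) (1 : ℂ) : LaurentRing3 n) - 1) ^ d i).coeff.support) := by
  let φ : (Fin n → ℤ) →+ (Fin n → ℝ) := (Int.castAddHom ℝ).compLeft (Fin n)
  have hφ : Function.Injective φ := Int.cast_injective.comp_left
  change newtonPolytope φ _ = (k : ℝ) • newtonPolytope φ _
  rw [newtonPolytope_prod hφ, newtonPolytope_prod hφ, Finset.smul_sum]
  refine Finset.sum_congr rfl fun i _ ↦ ?_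
  have hΔ : (single (v i) 1 : LaurentRing3 n) - 1 = aeval (single (v i) 1) (X - C 1 : ℂ[X]) := by
    simp
  rw [hΔ, newtonPolytope_aeval_single_pow hφ (hv i) (by rw [coeff_zero_eq_eval_zero]; exact h0 i),
    newtonPolytope_aeval_single_pow hφ (hv i) (by simp), hdeg, natDegree_X_sub_C, smul_smul]
  congr 1
  ring

/-- Let `n, k, j ≥ 1`, let `v₁,…,v_j ∈ ℤⁿ` be nonzero, `d₁,…,d_j > 0`,
and let `p₁,…,p_j ∈ ℂ[z]` be monic of degree `k` with `pᵢ(0) ≠ 0`.  Set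
`Δ = ∏ᵢ (t^{vᵢ} − 1)^{dᵢ}` and `Δ^φ = ∏ᵢ pᵢ(t^{vᵢ})^{dᵢ}` in `ℂ[t₁^{±1},…,tₙ^{±1}]`.
Then the Newton polytope (convex hull in `ℝⁿ` of the support) of `Δ^φ` equals `k` times
that of `Δ`. -/
theorem boundary_manifold_stmt3
    (n k j : ℕ) (hn : 1 ≤ n) (hk : 1 ≤ k) (hj : 1 ≤ j)
    (v : Fin j → (Fin n → ℤ)) (hv : ∀ i, v i ≠ 0)
    (d : Fin j → ℕ) (hd : ∀ i, 0 < d i)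
    (p : Fin j → Polynomial ℂ)
    (hmonic : ∀ i, (p i).Monic)
    (hdeg : ∀ i, (p i).natDegree = k)
    (h0 : ∀ i, (p i).eval 0 ≠ 0) :
    convexHull ℝ
      ((fun (w : Fin n → ℤ) (i : Fin n) => (w i : ℝ)) ''
        ↑(∏ i : Fin j,
          (Polynomial.aeval
            (AddMonoidAlgebra.single (v i) (1 : ℂ) : LaurentRing3 n) (p i)) ^ d i).coeff.support)
    = (k : ℝ) • convexHull ℝ
      ((fun (w : Fin n → ℤ) (i : Fin n) => (w i : ℝ)) ''
        ↑(∏ i : Fin j,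
          ((AddMonoidAlgebra.single (v i) (1 : ℂ) : LaurentRing3 n) - 1) ^ d i).coeff.support) :=
  boundary_manifold_stmt3_general n k j v hv d p hdeg h0
end

section
/- Let R be ℤ or a field of characteristic zero, let b_1, b_2 ≥ 0, let A^1 = R^{b_1} with basis α_1, …, α_{b_1} and A^2 = R^{b_2} with basis β_1, …, β_{b_2}, and let μ : A^1 × A^1 → A^2 be an alternating R-bilinear map with structure constants μ(α_i, α_j) = Σ_{k=1}^{b_2} μ_{i,j,k} β_k (so μ_{j,i,k} = −μ_{i,j,k}). Form the degree-1 and degree-2 pieces of the graded double: Â^1 = A^1 ⊕ (A^2)^* and Â^2 = A^2 ⊕ (A^1)^*, with multiplication μ̂ : Â^1 × Â^1 → Â^2 given by μ̂((a,f),(b,g)) = (μ(a,b), a·g + f·b), where (a·g)(x) = g(xa) and (f·b)(x) = f(bx). Let the holonomy Lie algebra h(Â) be the quotient of the free R-Lie algebra on the dual module Â_1 = (Â^1)^* — with basis x_1, …, x_{b_1} (dual to the α_i) and y_1, …, y_{b_2} (dual to the β̄_k) — by the Lie ideal generated by the image of the comultiplication map (Â^2)^* → Â_1 ∧ Â_1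 dual to μ̂, where Â_1 ∧ Â_1 is identified with the degree-2 part of the free Lie algebra via u ∧ v ↦ [u, v]. Then h(Â) is isomorphic, as a graded Lie algebra, to the quotient of the free R-Lie algebra on generators x_1, …, x_{b_1}, y_1, …, y_{b_2} (all in degree 1) by the Lie ideal generated by the b_2 elements Σ_{1 ≤ i < j ≤ b_1} μ_{i,j,k}[x_i, x_j] (one for each 1 ≤ k ≤ b_2) together with the b_1 elements Σ_{j=1}^{b_1} Σ_{k=1}^{b_2} μ_{i,j,k}[x_j, y_k] (one for each 1 ≤ i ≤ b_1). -/
private lemma aux1 {R M ι κ : Type} [CommRing R] [AddCommMonoid M] [Module R M] [Fintype ι]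
    [Fintype κ] [LinearOrder ι] (t : κ → R) (cc : ι → ι → κ → R) (B : ι → ι → M) :
    ∑ i, ∑ j, (if i < j then (∑ k, cc i j k * t k) • B i j else 0)
      = ∑ k, t k • ∑ i, ∑ j, (if i < j then cc i j k • B i j else 0) := by
  symm
  simp only [Finset.smul_sum, smul_ite, smul_smul, smul_zero]
  calc ∑ k : κ, ∑ i, ∑ j, (if i < j then (t k * cc i j k) • B i j else 0)
      = ∑ i, ∑ k : κ, ∑ j, (if i < j then (t k * cc i j k) • B i j else 0) :=
        Finset.sum_comm
    _ = ∑ i, ∑ j, ∑ k : κ, (if i < j then (t k * cc i j k) • B i j else 0) :=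
        Finset.sum_congr rfl fun i _ => Finset.sum_comm
    _ = ∑ i, ∑ j, (if i < j then (∑ k, cc i j k * t k) • B i j else 0) := by
        refine Finset.sum_congr rfl fun i _ => Finset.sum_congr rfl fun j _ => ?_
        rw [Finset.sum_ite_irrel, Finset.sum_const_zero]
        split_ifs with h
        · rw [Finset.sum_smul]
          exact Finset.sum_congr rfl fun k _ => by rw [mul_comm]
        · rfl

private lemma aux2 {R M ι κ : Type} [CommRing R] [AddCommMonoid M] [Module R M] [Fintype ι]
    [Fintype κ] (s : ι → R) (cc : ι → ι → κ → R) (C : ι → κ → M) :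
    ∑ i, ∑ k, (∑ j, cc j i k * s j) • C i k
      = ∑ i, s i • ∑ j, ∑ k, cc i j k • C j k := by
  simp only [Finset.sum_smul, Finset.smul_sum, smul_smul]
  calc ∑ i, ∑ k : κ, ∑ j, (cc j i k * s j) • C i k
      = ∑ i, ∑ j, ∑ k : κ, (cc j i k * s j) • C i k :=
        Finset.sum_congr rfl fun i _ => Finset.sum_comm
    _ = ∑ j, ∑ i, ∑ k : κ, (cc j i k * s j) • C i k := Finset.sum_comm
    _ = ∑ i, ∑ j, ∑ k : κ, (s i * cc i j k) • C j k := by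
        refine Finset.sum_congr rfl fun j _ => Finset.sum_congr rfl fun i _ =>
          Finset.sum_congr rfl fun k _ => by rw [mul_comm]


/-- Let `R` be `ℤ` or a field of characteristic zero, let
`A¹ = R^{b₁}`, `A² = R^{b₂}`, and let `μ : A¹ × A¹ → A²` be an alternating bilinear map
with structure constants `c i j k = μ(αᵢ, αⱼ)ₖ`.  Form the degree-1 and degree-2 pieces of
the graded double, `Â¹ = A¹ ⊕ (A²)^*` and `Â² = A² ⊕ (A¹)^*`, with multiplication
`μ̂((a,f),(b,g)) = (μ(a,b), a·g + f·b)` where `(a·g)(x) = g(μ(x,a))` and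
`(f·b)(x) = f(μ(b,x))`.  The holonomy Lie algebra of `Â` — the quotient of the free
`R`-Lie algebra on the basis `x₁,…,x_{b₁}, y₁,…,y_{b₂}` of `(Â¹)^*` by the Lie ideal
generated by the image of the comultiplication dual to `μ̂` (identifying `u ∧ v` with
`[u,v]`) — is isomorphic, via an isomorphism fixing the degree-one generators, to the
quotient of the free `R`-Lie algebra on `x₁,…,x_{b₁}, y₁,…,y_{b₂}` by the Lie ideal
generated by the `b₂` elements `Σ_{i<j} c i j k • [xᵢ, xⱼ]` and the `b₁` elements
`Σⱼ Σₖ c i j k • [xⱼ, yₖ]`. -/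
theorem boundary_manifold_stmt6
    (R : Type) [CommRing R]
    (hR : Nonempty (R ≃+* ℤ) ∨ (IsField R ∧ CharZero R))
    (b₁ b₂ : ℕ)
    (μ : (Fin b₁ → R) →ₗ[R] (Fin b₁ → R) →ₗ[R] (Fin b₂ → R))
    (halt : ∀ a : Fin b₁ → R, μ a a = 0) :
    -- the doubled multiplication `μ̂ : Â¹ × Â¹ → Â²`
    let μhat : ((Fin b₁ → R) × Module.Dual R (Fin b₂ → R)) →
        ((Fin b₁ → R) × Module.Dual R (Fin b₂ → R)) →
        ((Fin b₂ → R) × Module.Dual R (Fin b₁ → R)) := fun p q =>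
      (μ p.1 q.1, q.2 ∘ₗ μ.flip p.1 + p.2 ∘ₗ μ q.1)
    -- the basis of `Â¹` (dual to the generators `x_i`, `y_k`)
    let E : (Fin b₁ ⊕ Fin b₂) → ((Fin b₁ → R) × Module.Dual R (Fin b₂ → R)) :=
      Sum.elim (fun i => (Pi.single i 1, 0)) (fun k => (0, LinearMap.proj k))
    -- the free Lie algebra generators
    let F : (Fin b₁ ⊕ Fin b₂) → FreeLieAlgebra R (Fin b₁ ⊕ Fin b₂) := FreeLieAlgebra.of R
    -- structure constants of `μ`
    let c : Fin b₁ → Fin b₁ → Fin b₂ → R := fun i j k => μ (Pi.single i 1) (Pi.single j 1) k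
    -- the Lie ideal generated by the image of the comultiplication map dual to `μ̂`
    let I₁ : LieIdeal R (FreeLieAlgebra R (Fin b₁ ⊕ Fin b₂)) :=
      LieSubmodule.lieSpan R (FreeLieAlgebra R (Fin b₁ ⊕ Fin b₂))
        { w | ∃ ξ : Module.Dual R ((Fin b₂ → R) × Module.Dual R (Fin b₁ → R)),
            w = ∑ u : Fin b₁ ⊕ Fin b₂, ∑ v : Fin b₁ ⊕ Fin b₂,
              if finSumFinEquiv u < finSumFinEquiv v then
                ξ (μhat (E u) (E v)) • ⁅F u, F v⁆ else 0 }
    -- the Lie ideal of the explicit presentation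
    let I₂ : LieIdeal R (FreeLieAlgebra R (Fin b₁ ⊕ Fin b₂)) :=
      LieSubmodule.lieSpan R (FreeLieAlgebra R (Fin b₁ ⊕ Fin b₂))
        ((Set.range fun k : Fin b₂ =>
            ∑ i : Fin b₁, ∑ j : Fin b₁,
              if i < j then c i j k • ⁅F (Sum.inl i), F (Sum.inl j)⁆ else 0)
          ∪ (Set.range fun i : Fin b₁ =>
              ∑ j : Fin b₁, ∑ k : Fin b₂, c i j k • ⁅F (Sum.inl j), F (Sum.inr k)⁆))
    ∃ e : (FreeLieAlgebra R (Fin b₁ ⊕ Fin b₂) ⧸ I₁) ≃ₗ⁅R⁆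
        (FreeLieAlgebra R (Fin b₁ ⊕ Fin b₂) ⧸ I₂),
      ∀ u : Fin b₁ ⊕ Fin b₂,
        e (LieSubmodule.Quotient.mk (N := I₁) (F u)) =
          LieSubmodule.Quotient.mk (N := I₂) (F u) := by
  intro μhat E F c I₁ I₂
  have hξ1 : ∀ (ξ : Module.Dual R ((Fin b₂ → R) × Module.Dual R (Fin b₁ → R)))
      (v : Fin b₂ → R), ξ (v, 0) = ∑ k, v k * ξ (Pi.single k 1, 0) := by
    intro ξ v
    conv_lhs => rw [← Finset.univ_sum_single v]
    rw [show ((∑ k, Pi.single k (v k) : Fin b₂ → R),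
          (0 : Module.Dual R (Fin b₁ → R))) = ∑ k, ((Pi.single k (v k) : Fin b₂ → R),
          (0 : Module.Dual R (Fin b₁ → R))) from
        Prod.ext (by simp [Prod.fst_sum]) (by simp [Prod.snd_sum]), map_sum]
    refine Finset.sum_congr rfl fun k _ => ?_
    rw [show ((Pi.single k (v k) : Fin b₂ → R), (0 : Module.Dual R (Fin b₁ → R))) =
        v k • ((Pi.single k (1:R) : Fin b₂ → R), (0 : Module.Dual R (Fin b₁ → R))) by
      rw [Prod.smul_mk, ← Pi.single_smul, smul_eq_mul, mul_one, smul_zero], map_smul,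
      smul_eq_mul]
  have hf : ∀ f : Module.Dual R (Fin b₁ → R),
      f = ∑ j, f (Pi.single j 1) • LinearMap.proj j := by
    intro f
    refine LinearMap.ext fun x => ?_
    rw [LinearMap.sum_apply]
    conv_lhs => rw [← Finset.univ_sum_single x, map_sum]
    refine Finset.sum_congr rfl fun j _ => ?_
    rw [show (Pi.single j (x j) : Fin b₁ → R) = x j • (Pi.single j (1:R) : Fin b₁ → R) by
      rw [← Pi.single_smul, smul_eq_mul, mul_one], map_smul]
    simp [mul_comm]
  have hξ2 : ∀ (ξ : Module.Dual R ((Fin b₂ → R) × Module.Dual R (Fin b₁ → R)))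
      (f : Module.Dual R (Fin b₁ → R)),
      ξ (0, f) = ∑ j, f (Pi.single j 1) * ξ (0, LinearMap.proj j) := by
    intro ξ f
    conv_lhs => rw [hf f]
    rw [show ((0 : Fin b₂ → R), ∑ j, f (Pi.single j 1) • LinearMap.proj j) =
        ∑ j, ((0 : Fin b₂ → R), f (Pi.single j 1) • (LinearMap.proj j :
          Module.Dual R (Fin b₁ → R))) from
        Prod.ext (by simp [Prod.fst_sum]) (by simp [Prod.snd_sum]), map_sum]
    refine Finset.sum_congr rfl fun j _ => ?_
    rw [show ((0 : Fin b₂ → R), f (Pi.single j 1) • (LinearMap.proj j :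
        Module.Dual R (Fin b₁ → R))) = f (Pi.single j 1) • ((0 : Fin b₂ → R),
        (LinearMap.proj j : Module.Dual R (Fin b₁ → R))) by
      rw [Prod.smul_mk, smul_zero], map_smul, smul_eq_mul]
  have key : ∀ ξ : Module.Dual R ((Fin b₂ → R) × Module.Dual R (Fin b₁ → R)),
      (∑ u : Fin b₁ ⊕ Fin b₂, ∑ v : Fin b₁ ⊕ Fin b₂,
        if finSumFinEquiv u < finSumFinEquiv v then
          ξ (μhat (E u) (E v)) • ⁅F u, F v⁆ else 0)
      = ∑ k, ξ (Pi.single k 1, 0) •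
          (∑ i : Fin b₁, ∑ j : Fin b₁,
            if i < j then c i j k • ⁅F (Sum.inl i), F (Sum.inl j)⁆ else 0)
        + ∑ i, ξ (0, LinearMap.proj i) •
          (∑ j : Fin b₁, ∑ k : Fin b₂, c i j k • ⁅F (Sum.inl j), F (Sum.inr k)⁆) := by
    intro ξ
    rw [Fintype.sum_sum_type]
    simp only [Fintype.sum_sum_type]
    have hll : ∀ i j : Fin b₁,
        (if finSumFinEquiv (Sum.inl i : Fin b₁ ⊕ Fin b₂) < finSumFinEquiv (Sum.inl j) then
          ξ (μhat (E (Sum.inl i)) (E (Sum.inl j))) • ⁅F (Sum.inl i), F (Sum.inl j)⁆ else 0)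
        = if i < j then
            (∑ k, c i j k * ξ (Pi.single k 1, 0)) • ⁅F (Sum.inl i), F (Sum.inl j)⁆ else 0 := by
      intro i j
      have hcond : (finSumFinEquiv (Sum.inl i : Fin b₁ ⊕ Fin b₂) <
          finSumFinEquiv (Sum.inl j)) ↔ i < j := by
        simp only [finSumFinEquiv_apply_left, Fin.lt_def, Fin.coe_castAdd]
      rw [if_congr hcond rfl rfl]
      split_ifs with h
      · congr 1
        simp only [μhat, E, Sum.elim_inl]
        rw [show ((0 : Module.Dual R (Fin b₂ → R)) ∘ₗ μ.flip (Pi.single i 1) +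
            (0 : Module.Dual R (Fin b₂ → R)) ∘ₗ μ (Pi.single j 1)) = 0 by
          simp]
        rw [hξ1]
      · rfl
    have hlr : ∀ (i : Fin b₁) (k : Fin b₂),
        (if finSumFinEquiv (Sum.inl i : Fin b₁ ⊕ Fin b₂) < finSumFinEquiv (Sum.inr k) then
          ξ (μhat (E (Sum.inl i)) (E (Sum.inr k))) • ⁅F (Sum.inl i), F (Sum.inr k)⁆ else 0)
        = (∑ j, c j i k * ξ (0, LinearMap.proj j)) • ⁅F (Sum.inl i), F (Sum.inr k)⁆ := by
      intro i k
      rw [if_pos (by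
        simp only [finSumFinEquiv_apply_left, finSumFinEquiv_apply_right, Fin.lt_def,
          Fin.coe_castAdd, Fin.coe_natAdd]
        exact lt_of_lt_of_le i.isLt (Nat.le_add_right _ _))]
      congr 1
      simp only [μhat, E, Sum.elim_inl, Sum.elim_inr]
      rw [show (μ (Pi.single i 1) 0 : Fin b₂ → R) = 0 from map_zero _]
      rw [show ((0 : Module.Dual R (Fin b₂ → R)) ∘ₗ μ (0 : Fin b₁ → R)) = 0 by simp]
      rw [add_zero, hξ2]
      rfl
    have hrl : ∀ (k : Fin b₂) (i : Fin b₁),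
        (if finSumFinEquiv (Sum.inr k : Fin b₁ ⊕ Fin b₂) < finSumFinEquiv (Sum.inl i) then
          ξ (μhat (E (Sum.inr k)) (E (Sum.inl i))) • ⁅F (Sum.inr k), F (Sum.inl i)⁆ else 0)
        = 0 := by
      intro k i
      rw [if_neg]
      simp only [finSumFinEquiv_apply_left, finSumFinEquiv_apply_right, Fin.lt_def,
        Fin.coe_castAdd, Fin.coe_natAdd]
      have := i.isLt
      omega
    have hrr : ∀ k l : Fin b₂,
        (if finSumFinEquiv (Sum.inr k : Fin b₁ ⊕ Fin b₂) < finSumFinEquiv (Sum.inr l) then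
          ξ (μhat (E (Sum.inr k)) (E (Sum.inr l))) • ⁅F (Sum.inr k), F (Sum.inr l)⁆ else 0)
        = 0 := by
      intro k l
      have h0 : μhat (E (Sum.inr k)) (E (Sum.inr l)) = 0 := by
        simp only [μhat, E, Sum.elim_inr]
        rw [Prod.mk_eq_zero]
        constructor
        · simp
        · simp
      rw [h0, map_zero, zero_smul, ite_self]
    simp only [hll, hlr, hrl, hrr, Finset.sum_const_zero, add_zero]
    rw [Finset.sum_add_distrib]
    congr 1
    · exact aux1 _ _ _
    · exact aux2 _ _ _
  have h12 : I₁ ≤ I₂ := by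
    rw [LieSubmodule.lieSpan_le]
    rintro w ⟨ξ, rfl⟩
    rw [SetLike.mem_coe, key ξ, ← LieSubmodule.mem_toSubmodule]
    refine Submodule.add_mem _
      (Submodule.sum_mem _ fun k _ => Submodule.smul_mem _ _ ?_)
      (Submodule.sum_mem _ fun i _ => Submodule.smul_mem _ _ ?_)
    · rw [LieSubmodule.mem_toSubmodule]
      exact LieSubmodule.subset_lieSpan (Set.mem_union_left _ ⟨k, rfl⟩)
    · rw [LieSubmodule.mem_toSubmodule]
      exact LieSubmodule.subset_lieSpan (Set.mem_union_right _ ⟨i, rfl⟩)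
  have h21 : I₂ ≤ I₁ := by
    rw [LieSubmodule.lieSpan_le]
    rintro w (⟨k, rfl⟩ | ⟨i, rfl⟩)
    · rw [SetLike.mem_coe]
      refine LieSubmodule.subset_lieSpan
        ⟨(LinearMap.proj k).comp (LinearMap.fst R _ _), ?_⟩
      rw [key]
      simp [LinearMap.proj_apply, Pi.single_apply, ite_smul, Finset.sum_ite_eq,
        Finset.sum_ite_eq']
    · rw [SetLike.mem_coe]
      refine LieSubmodule.subset_lieSpan
        ⟨LinearMap.comp
          (LinearMap.applyₗ (Pi.single i 1) : Module.Dual R (Fin b₁ → R) →ₗ[R] R)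
          (LinearMap.snd R (Fin b₂ → R) (Module.Dual R (Fin b₁ → R))), ?_⟩
      rw [key]
      simp [LinearMap.proj_apply, Pi.single_apply, ite_smul, Finset.sum_ite_eq,
        Finset.sum_ite_eq']
  have hI : I₁ = I₂ := le_antisymm h12 h21
  rw [hI]
  exact ⟨LieEquiv.refl, fun u => rfl⟩
end

section
/- Let g ≥ 2 be an integer. Let ω : ℂ^{2g} × ℂ^{2g} → ℂ be the standard symplectic form ω(x, y) = Σ_{i=1}^{g} (x_i y_{g+i} − x_{g+i} y_i). For u = (c, x) and v = (c', y) in ℂ × ℂ^{2g} = ℂ^{2g+1}, define B(u, v) := (c·y − c'·x, ω(x, y)) ∈ ℂ^{2g} × ℂ. Then the set { u ∈ ℂ^{2g+1} : there exists v ∈ ℂ^{2g+1} with B(u, v) = 0 and v ∉ ℂ·u } equals the codimension-one subspace { (c, x) ∈ ℂ × ℂ^{2g} : c = 0 }, which is isomorphic to ℂ^{2g}. -/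
/-- Let `g ≥ 2`, let `ω` be the standard symplectic form on `ℂ^{2g}`, and
for `u = (c, x)`, `v = (c', y)` in `ℂ × ℂ^{2g}` let `B(u,v) = (c·y − c'·x, ω(x,y))`.
Then `{ u | ∃ v, B(u,v) = 0 ∧ v ∉ ℂ·u }` is the codimension-one subspace
`{ (c,x) | c = 0 }`, which is isomorphic to `ℂ^{2g}`. -/
theorem boundary_manifold_stmt7 (g : ℕ) (hg : 2 ≤ g) :
    let ω : (Fin (2 * g) → ℂ) → (Fin (2 * g) → ℂ) → ℂ := fun x y =>
      ∑ i : Fin g,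
        (x ⟨i.1, by have := i.isLt; omega⟩ * y ⟨g + i.1, by have := i.isLt; omega⟩
          - x ⟨g + i.1, by have := i.isLt; omega⟩ * y ⟨i.1, by have := i.isLt; omega⟩)
    let B : (ℂ × (Fin (2 * g) → ℂ)) → (ℂ × (Fin (2 * g) → ℂ)) →
        ((Fin (2 * g) → ℂ) × ℂ) := fun u v =>
      (u.1 • v.2 - v.1 • u.2, ω u.2 v.2)
    { u : ℂ × (Fin (2 * g) → ℂ) |
        ∃ v : ℂ × (Fin (2 * g) → ℂ), B u v = 0 ∧ v ∉ Submodule.span ℂ {u} }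
      = (LinearMap.ker (LinearMap.fst ℂ ℂ (Fin (2 * g) → ℂ)) : Set (ℂ × (Fin (2 * g) → ℂ)))
    ∧ Nonempty
        ((LinearMap.ker (LinearMap.fst ℂ ℂ (Fin (2 * g) → ℂ))) ≃ₗ[ℂ] (Fin (2 * g) → ℂ)) := by
  intro ω B
  constructor
  · ext u
    obtain ⟨c, x⟩ := u
    simp only [Set.mem_setOf_eq, SetLike.mem_coe, LinearMap.mem_ker, LinearMap.fst_apply]
    constructor
    · rintro ⟨⟨c', y⟩, hB, hv⟩
      by_contra hc
      apply hv
      have h1 : c • y - c' • x = 0 := congrArg Prod.fst hB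
      rw [Submodule.mem_span_singleton]
      refine ⟨c' / c, ?_⟩
      have hy : y = (c' / c) • x := by
        have : c • y = c' • x := by rwa [sub_eq_zero] at h1
        funext i
        have := congrFun this i
        simp only [Pi.smul_apply, smul_eq_mul] at this ⊢
        field_simp
        linear_combination this
      rw [Prod.smul_mk]
      simp [smul_eq_mul, div_mul_cancel₀ _ hc, hy]
    · intro hc
      subst hc
      by_cases hx : x = 0
      · refine ⟨(1, 0), ?_, ?_⟩
        · simp [B, ω, hx]
        · intro h
          rw [Submodule.mem_span_singleton] at h
          obtain ⟨a, ha⟩ := h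
          simp [hx, Prod.ext_iff] at ha
      · -- x ≠ 0 : find y with ω x y = 0, y ∉ span {x}
        set f : (Fin (2 * g) → ℂ) →ₗ[ℂ] ℂ :=
          { toFun := fun y => ω x y
            map_add' := by
              intro y z
              simp only [ω, Pi.add_apply]
              rw [← Finset.sum_add_distrib]
              exact Finset.sum_congr rfl (fun i _ => by ring)
            map_smul' := by
              intro m y
              simp only [ω, Pi.smul_apply, smul_eq_mul, RingHom.id_apply]
              rw [Finset.mul_sum]
              exact Finset.sum_congr rfl (fun i _ => by ring) } with hf
        have hker : ¬ (LinearMap.ker f ≤ Submodule.span ℂ {x}) := by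
          intro hle
          have h1 : Module.finrank ℂ (LinearMap.ker f) ≤
              Module.finrank ℂ (Submodule.span ℂ ({x} : Set (Fin (2 * g) → ℂ))) :=
            Submodule.finrank_mono hle
          rw [finrank_span_singleton hx] at h1
          have h2 := LinearMap.finrank_range_add_finrank_ker f
          have h3 : Module.finrank ℂ (LinearMap.range f) ≤ 1 := by
            simpa using (LinearMap.range f).finrank_le
          rw [Module.finrank_fin_fun] at h2
          omega
        rw [SetLike.not_le_iff_exists] at hker
        obtain ⟨y, hy, hy'⟩ := hker
        rw [LinearMap.mem_ker] at hy
        refine ⟨(0, y), ?_, ?_⟩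
        · have : ω x y = 0 := hy
          simp [B, this]
        · intro h
          rw [Submodule.mem_span_singleton] at h
          obtain ⟨a, ha⟩ := h
          rw [Prod.ext_iff] at ha
          exact hy' (Submodule.mem_span_singleton.2 ⟨a, ha.2⟩)
  · exact ⟨Submodule.sndEquiv ℂ ℂ (Fin (2 * g) → ℂ)⟩
end

section
/- Let n ≥ 3. Let F be the free group on generators x_1, …, x_n, γ_2, …, γ_n, and write a^b = b^{-1}ab. Set z = x_1 · x_2^{γ_2} · x_3^{γ_3} ⋯ x_n^{γ_n} and ζ = x_1 x_2 ⋯ x_n in F. Let G be the quotient of F by the normal closure of the 2n−1 relators: z ζ^{-1}; the words x_j γ_j z γ_j^{-1} x_j^{-1} ζ^{-1} for 2 ≤ j ≤ n; and the commutators [z, x_j^{γ_j}] for 2 ≤ j ≤ n. Let Π be the genus-(n−1) surface group, i.e., the quotient of the free group on g_1, …, g_{2n−2} by the normal closure of the single relator [g_1, g_2][g_3, g_4] ⋯ [g_{2n−3}, g_{2n−2}], where [a,b] = aba^{-1}b^{-1}. Then G is isomorphic to the direct product ℤ × Π. -/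
/-!
The relators say that `z = ζ` and that `ζ` commutes with `x_j γ_j` and with `x_j^{γ_j}`, hence
with `γ_j = (x_j γ_j)(x_j^{γ_j})⁻¹`, with `x_j`, and with `x_1 = ζ (x_2 ⋯ x_n)⁻¹`: `ζ` is central.
Writing `W_k = x_2 ⋯ x_{k+1}`, the product of the commutators
`[W_k γ_{k+2}⁻¹ W_k⁻¹, W_k x_{k+2} W_k⁻¹]` telescopes to `x_2^{γ_2} ⋯ x_n^{γ_n} (x_2 ⋯ x_n)⁻¹`,
which is trivial because `z = ζ`. So these conjugates satisfy the surface relation, which gives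
`ℤ × Π → G` with `1 ↦ ζ`; an explicit inverse is checked on generators.
-/

namespace BoundaryManifoldStmt8

/-- The relators of the presentation of the fundamental group of the boundary manifold of
a near-pencil of `n+1` lines: generators `x_1, …, x_n` (indexed by `Fin n`, with `x_{i+1}`
at index `i`) and `γ_2, …, γ_n` (indexed by `Fin (n-1)`, with `γ_{j+2}` at index `j`).
With `z = x_1 x_2^{γ_2} ⋯ x_n^{γ_n}` (where `a^b = b⁻¹ a b`) and `ζ = x_1 x_2 ⋯ x_n`,
the relators are `z ζ⁻¹`, the words `x_j γ_j z γ_j⁻¹ x_j⁻¹ ζ⁻¹` for `2 ≤ j ≤ n`, and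
the commutators `[z, x_j^{γ_j}] = a b a⁻¹ b⁻¹` for `2 ≤ j ≤ n`. -/
def npRels (n : ℕ) (hn : 3 ≤ n) : Set (FreeGroup (Fin n ⊕ Fin (n - 1))) :=
  let x : Fin n → FreeGroup (Fin n ⊕ Fin (n - 1)) := fun i => FreeGroup.of (Sum.inl i)
  let γ : Fin (n - 1) → FreeGroup (Fin n ⊕ Fin (n - 1)) := fun j => FreeGroup.of (Sum.inr j)
  -- `x_{j}` for `2 ≤ j ≤ n`, at index `j : Fin (n-1)`
  let x' : Fin (n - 1) → FreeGroup (Fin n ⊕ Fin (n - 1)) := fun j =>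
    x ⟨j.1 + 1, by have := j.isLt; omega⟩
  -- `z = x_1 · x_2^{γ_2} ⋯ x_n^{γ_n}`
  let z : FreeGroup (Fin n ⊕ Fin (n - 1)) :=
    x ⟨0, by omega⟩ * (List.ofFn (fun j : Fin (n - 1) => (γ j)⁻¹ * x' j * γ j)).prod
  let ζ : FreeGroup (Fin n ⊕ Fin (n - 1)) := (List.ofFn x).prod
  {z * ζ⁻¹}
    ∪ (Set.range fun j : Fin (n - 1) => x' j * γ j * z * (γ j)⁻¹ * (x' j)⁻¹ * ζ⁻¹)
    ∪ (Set.range fun j : Fin (n - 1) =>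
        z * ((γ j)⁻¹ * x' j * γ j) * z⁻¹ * ((γ j)⁻¹ * x' j * γ j)⁻¹)

/-- The single relator `[g_1,g_2][g_3,g_4] ⋯ [g_{2n-3},g_{2n-2}]` of the genus-`(n-1)`
surface group, on generators `g_1, …, g_{2n-2}` (with `g_{i+1}` at index `i : Fin (2n-2)`),
where `[a,b] = a b a⁻¹ b⁻¹`. -/
def surfaceRels (n : ℕ) : Set (FreeGroup (Fin (2 * n - 2))) :=
  let g : Fin (2 * n - 2) → FreeGroup (Fin (2 * n - 2)) := FreeGroup.of
  { (List.ofFn (fun t : Fin (n - 1) =>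
      g ⟨2 * t.1, by have := t.isLt; omega⟩ * g ⟨2 * t.1 + 1, by have := t.isLt; omega⟩ *
        (g ⟨2 * t.1, by have := t.isLt; omega⟩)⁻¹ *
        (g ⟨2 * t.1 + 1, by have := t.isLt; omega⟩)⁻¹)).prod }

open scoped commutatorElement

theorem prod_ofFn_eq_prod_map_range {M : Type*} [Monoid M] (u : ℕ → M) (k : ℕ) :
    (List.ofFn fun i : Fin k => u i).prod = ((List.range k).map u).prod := by
  rw [List.ofFn_eq_map, ← List.map_coe_finRange_eq_range, List.map_map]
  rfl

section Group

variable {H : Type*} [Group H]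

theorem prod_map_range_telescope {u Q : ℕ → H} {k : ℕ}
    (h : ∀ t < k, u t = (Q t)⁻¹ * Q (t + 1)) :
    ((List.range k).map u).prod = (Q 0)⁻¹ * Q k := by
  induction k with
  | zero => simp
  | succ k ih =>
    rw [List.prod_range_succ, ih fun t ht => h t (by omega), h k k.lt_succ_self]
    group

theorem commute_mul_and_commute_conj_iff {z x γ : H} :
    Commute (x * γ) z ∧ Commute z (γ⁻¹ * x * γ) ↔ Commute z x ∧ Commute z γ := by
  constructor
  · rintro ⟨hxγ, hconj⟩
    have hγ : Commute z γ := by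
      simpa using hxγ.symm.mul_right hconj.inv_right
    exact ⟨by simpa using hxγ.symm.mul_right hγ.inv_right, hγ⟩
  · rintro ⟨hx, hγ⟩
    exact ⟨(hx.mul_right hγ).symm, (hγ.inv_right.mul_right hx).mul_right hγ⟩

end Group

theorem PresentedGroup.lift_of_eq_one_of_mem {α : Type*} {rels : Set (FreeGroup α)}
    {r : FreeGroup α} (hr : r ∈ rels) : FreeGroup.lift (PresentedGroup.of (rels := rels)) r = 1 := by
  rw [show FreeGroup.lift PresentedGroup.of = PresentedGroup.mk rels from
    FreeGroup.ext_hom _ _ fun _ => FreeGroup.lift_apply_of]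
  exact PresentedGroup.one_of_mem hr

theorem PresentedGroup.commute_of_forall_commute_of {α : Type*} {rels : Set (FreeGroup α)}
    {z : PresentedGroup rels} (h : ∀ a, Commute z (PresentedGroup.of a)) (y : PresentedGroup rels) :
    Commute z y := by
  have := PresentedGroup.generated_by rels (Subgroup.centralizer {z})
    (fun a => Subgroup.mem_centralizer_singleton_iff.mpr (h a).symm) y
  exact (Subgroup.mem_centralizer_singleton_iff.mp this).symm

section NatExtend

variable {M N : Type*} [One M] [One N]

def natExtend {k : ℕ} (v : Fin k → M) (i : ℕ) : M :=
  if h : i < k then v ⟨i, h⟩ else 1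

theorem natExtend_of_lt {k : ℕ} (v : Fin k → M) {i : ℕ} (h : i < k) :
    natExtend v i = v ⟨i, h⟩ :=
  dif_pos h

theorem map_natExtend {F : Type*} [FunLike F M N] [OneHomClass F M N] (φ : F) {k : ℕ}
    (v : Fin k → M) (i : ℕ) : φ (natExtend v i) = natExtend (φ ∘ v) i := by
  unfold natExtend
  split_ifs <;> simp

end NatExtend

section NearPencil

variable {H K : Type*} [Group H] [Group K] {n : ℕ} (f : Fin n ⊕ Fin (n - 1) → H)

/- `npX f i = x_{i+1}`, `npγ f t = γ_{t+2}`, `npW f k = x_2 ⋯ x_{k+1}` and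
`npC f k = x_2^{γ_2} ⋯ x_{k+1}^{γ_{k+1}}`, so that `z = x_1 · npC f (n - 1)` and `ζ = npζ f`;
out-of-range indices give `1`. -/
def npX : ℕ → H := natExtend (f ∘ Sum.inl)

def npγ : ℕ → H := natExtend (f ∘ Sum.inr)

def npW (k : ℕ) : H := ((List.range k).map fun t => npX f (t + 1)).prod

def npC (k : ℕ) : H := ((List.range k).map fun t => (npγ f t)⁻¹ * npX f (t + 1) * npγ f t).prod

def npζ : H := npX f 0 * npW f (n - 1)

theorem npX_val (i : Fin n) : npX f i = f (.inl i) :=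
  natExtend_of_lt _ i.isLt

theorem npγ_val (j : Fin (n - 1)) : npγ f j = f (.inr j) :=
  natExtend_of_lt _ j.isLt

theorem npW_succ (k : ℕ) : npW f (k + 1) = npW f k * npX f (k + 1) :=
  List.prod_range_succ _ _

theorem npC_succ (k : ℕ) :
    npC f (k + 1) = npC f k * ((npγ f k)⁻¹ * npX f (k + 1) * npγ f k) :=
  List.prod_range_succ _ _

theorem map_npX (φ : H →* K) (i : ℕ) : φ (npX f i) = npX (φ ∘ f) i :=
  map_natExtend φ _ i

theorem map_npγ (φ : H →* K) (t : ℕ) : φ (npγ f t) = npγ (φ ∘ f) t :=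
  map_natExtend φ _ t

theorem map_npW (φ : H →* K) (k : ℕ) : φ (npW f k) = npW (φ ∘ f) k := by
  simp only [npW, map_list_prod, List.map_map, Function.comp_def, map_npX]

theorem map_npζ (φ : H →* K) : φ (npζ f) = npζ (φ ∘ f) := by
  rw [npζ, npζ, map_mul, map_npX, map_npW]

theorem prod_ofFn_npX (hn : 1 ≤ n) : (List.ofFn fun i : Fin n => npX f i).prod = npζ f := by
  obtain ⟨m, rfl⟩ := Nat.exists_eq_add_of_le' hn
  rw [prod_ofFn_eq_prod_map_range, List.prod_range_succ']
  rfl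

theorem lift_npRels_eq_one_iff (hn : 3 ≤ n) :
    (∀ r ∈ npRels n hn, FreeGroup.lift f r = 1) ↔
      npC f (n - 1) = npW f (n - 1) ∧ (∀ j : Fin (n - 1), Commute (npζ f) (npX f (j + 1))) ∧
        ∀ j : Fin (n - 1), Commute (npζ f) (npγ f j) := by
  have hC : (List.ofFn fun j : Fin (n - 1) => (npγ f j)⁻¹ * npX f (j + 1) * npγ f j).prod =
      npC f (n - 1) :=
    prod_ofFn_eq_prod_map_range (fun t => (npγ f t)⁻¹ * npX f (t + 1) * npγ f t) _
  simp only [npRels, Set.mem_union, Set.mem_singleton_iff, Set.mem_range, or_imp, forall_and,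
    forall_eq, forall_exists_index, forall_apply_eq_imp_iff, map_mul, map_inv, map_list_prod,
    List.map_ofFn, Function.comp_def, FreeGroup.lift_apply_of, ← npX_val f, ← npγ_val f, hC,
    prod_ofFn_npX f (by omega : 1 ≤ n)]
  have hz : npX f 0 * npC f (n - 1) = npζ f ↔ npC f (n - 1) = npW f (n - 1) := mul_right_inj _
  constructor
  · rintro ⟨⟨hzζ, hR2⟩, hR3⟩
    rw [mul_inv_eq_one] at hzζ
    simp only [hzζ] at hR2 hR3
    have hcomm (j : Fin (n - 1)) :
        Commute (npζ f) (npX f (j + 1)) ∧ Commute (npζ f) (npγ f j) :=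
      commute_mul_and_commute_conj_iff.mp
        ⟨commutatorElement_eq_one_iff_commute.mp (by rw [← hR2 j]; group),
          commutatorElement_eq_one_iff_commute.mp (hR3 j)⟩
    exact ⟨hz.mp hzζ, fun j => (hcomm j).1, fun j => (hcomm j).2⟩
  · rintro ⟨hCW, hX, hΓ⟩
    have hcomm (j : Fin (n - 1)) :
        Commute (npX f (j + 1) * npγ f j) (npζ f) ∧
          Commute (npζ f) ((npγ f j)⁻¹ * npX f (j + 1) * npγ f j) :=
      commute_mul_and_commute_conj_iff.mpr ⟨hX j, hΓ j⟩
    simp only [hz.mpr hCW, mul_inv_cancel, true_and]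
    refine ⟨fun j => ?_, fun j => commutatorElement_eq_one_iff_commute.mpr (hcomm j).2⟩
    rw [← commutatorElement_eq_one_iff_commute.mpr (hcomm j).1]
    group

end NearPencil

section Surface

variable {H K : Type*} [Group H] [Group K] {n : ℕ} (g : Fin (2 * n - 2) → H)

/- `sgA g t = g_{2t+1}` and `sgB g t = g_{2t+2}`, so the surface relator is `sgRel g (n - 1)`. -/
def sgA (t : ℕ) : H := natExtend g (2 * t)

def sgB (t : ℕ) : H := natExtend g (2 * t + 1)

def sgRel (k : ℕ) : H := ((List.range k).map fun t => (⁅sgA g t, sgB g t⁆ : H)).prod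

def sgBInvProd (k : ℕ) : H := ((List.range k).map fun t => (sgB g t)⁻¹).prod

theorem sgRel_succ (k : ℕ) :
    sgRel g (k + 1) = sgRel g k * ⁅sgA g k, sgB g k⁆ :=
  List.prod_range_succ _ _

theorem sgBInvProd_succ (k : ℕ) :
    sgBInvProd g (k + 1) = sgBInvProd g k * (sgB g k)⁻¹ :=
  List.prod_range_succ _ _

theorem map_sgA (φ : H →* K) (t : ℕ) : φ (sgA g t) = sgA (φ ∘ g) t :=
  map_natExtend φ _ _

theorem map_sgB (φ : H →* K) (t : ℕ) : φ (sgB g t) = sgB (φ ∘ g) t :=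
  map_natExtend φ _ _

theorem map_sgBInvProd (φ : H →* K) (k : ℕ) :
    φ (sgBInvProd g k) = sgBInvProd (φ ∘ g) k := by
  simp only [sgBInvProd, map_list_prod, List.map_map, Function.comp_def, map_inv, map_sgB]

theorem lift_surfaceRels_eq_one_iff :
    (∀ r ∈ surfaceRels n, FreeGroup.lift g r = 1) ↔ sgRel g (n - 1) = 1 := by
  have hA (t : ℕ) (ht : 2 * t < 2 * n - 2) : g ⟨2 * t, ht⟩ = sgA g t :=
    (natExtend_of_lt g ht).symm
  have hB (t : ℕ) (ht : 2 * t + 1 < 2 * n - 2) : g ⟨2 * t + 1, ht⟩ = sgB g t :=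
    (natExtend_of_lt g ht).symm
  simp only [surfaceRels, Set.mem_singleton_iff, forall_eq, map_list_prod, List.map_ofFn,
    Function.comp_def, map_mul, map_inv, FreeGroup.lift_apply_of, hA, hB]
  rw [prod_ofFn_eq_prod_map_range (fun t => sgA g t * sgB g t * (sgA g t)⁻¹ * (sgB g t)⁻¹)]
  rfl

theorem surfaceGroup_hom_ext {φ ψ : PresentedGroup (surfaceRels n) →* H}
    (hA : ∀ t < n - 1, φ (sgA PresentedGroup.of t) = ψ (sgA PresentedGroup.of t))
    (hB : ∀ t < n - 1, φ (sgB PresentedGroup.of t) = ψ (sgB PresentedGroup.of t)) : φ = ψ := by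
  refine PresentedGroup.ext fun ⟨m, hm⟩ => ?_
  obtain ⟨t, rfl | rfl⟩ := Nat.even_or_odd' m
  · simpa only [sgA, natExtend_of_lt _ hm] using hA t (by omega)
  · simpa only [sgB, natExtend_of_lt _ hm] using hB t (by omega)

end Surface

section NearPencilGroup

variable {n : ℕ} (hn : 3 ≤ n)

local notation "og" => (PresentedGroup.of : Fin n ⊕ Fin (n - 1) → PresentedGroup (npRels n hn))

theorem npC_of_eq_npW : npC og (n - 1) = npW og (n - 1) :=
  ((lift_npRels_eq_one_iff og hn).mp fun _ => PresentedGroup.lift_of_eq_one_of_mem).1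

theorem commute_npζ_of (y : PresentedGroup (npRels n hn)) : Commute (npζ og) y := by
  obtain ⟨-, hX, hγ⟩ :=
    (lift_npRels_eq_one_iff og hn).mp fun _ => PresentedGroup.lift_of_eq_one_of_mem
  have hW : Commute (npζ og) (npW og (n - 1)) :=
    Commute.list_prod_right _ _ fun _ hx => by
      obtain ⟨t, ht, rfl⟩ := List.mem_map.mp hx
      exact hX ⟨t, List.mem_range.mp ht⟩
  refine PresentedGroup.commute_of_forall_commute_of (fun a => ?_) y
  rcases a with ⟨_ | t, hi⟩ | j
  · rw [← npX_val og, eq_mul_inv_of_mul_eq (rfl : npX og 0 * npW og (n - 1) = npζ og)]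
    exact (Commute.refl _).mul_right hW.inv_right
  · rw [← npX_val og]
    exact hX ⟨t, by omega⟩
  · rw [← npγ_val og]
    exact hγ j

end NearPencilGroup

section SurfaceGen

variable {H : Type*} [Group H] {n : ℕ} (f : Fin n ⊕ Fin (n - 1) → H)

/- The map of Example 3.5: `g_{2k-1} ↦ W γ_{k+1}⁻¹ W⁻¹` and `g_{2k} ↦ W x_{k+1} W⁻¹`,
with `W = x_2 ⋯ x_k`. -/
def surfaceGen (m : Fin (2 * n - 2)) : H :=
  npW f (m / 2) * (if (m : ℕ) % 2 = 0 then (npγ f (m / 2))⁻¹ else npX f (m / 2 + 1)) *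
    (npW f (m / 2))⁻¹

variable {f}

theorem sgA_surfaceGen {t : ℕ} (ht : t < n - 1) :
    sgA (surfaceGen f) t = npW f t * (npγ f t)⁻¹ * (npW f t)⁻¹ := by
  rw [sgA, natExtend_of_lt _ (by omega), surfaceGen]
  simp

theorem sgB_surfaceGen {t : ℕ} (ht : t < n - 1) :
    sgB (surfaceGen f) t = npW f t * npX f (t + 1) * (npW f t)⁻¹ := by
  rw [sgB, natExtend_of_lt _ (by omega), surfaceGen]
  simp [show (2 * t + 1) / 2 = t by omega]

theorem sgRel_surfaceGen : sgRel (surfaceGen f) (n - 1) = npC f (n - 1) * (npW f (n - 1))⁻¹ := by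
  rw [sgRel, prod_map_range_telescope (Q := fun k => npC f k * (npW f k)⁻¹) fun t ht => ?_]
  · simp [npC, npW]
  · rw [sgA_surfaceGen ht, sgB_surfaceGen ht, npC_succ, npW_succ]
    group

theorem sgBInvProd_surfaceGen {k : ℕ} (hk : k ≤ n - 1) :
    sgBInvProd (surfaceGen f) k = (npW f k)⁻¹ := by
  rw [sgBInvProd, prod_map_range_telescope (Q := fun k => (npW f k)⁻¹) fun t ht => ?_]
  · simp [npW]
  · rw [sgB_surfaceGen (by omega), npW_succ]
    group

end SurfaceGen

section PencilGen

variable {K : Type*} [Group K] {n : ℕ} (g : Fin (2 * n - 2) → K)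

/- The inverse of `surfaceGen`, solved for the generators: `sgBInvProd g t` corresponds to
`(x_2 ⋯ x_{t+1})⁻¹`, and `x_1 = ζ (x_2 ⋯ x_n)⁻¹` with `ζ` the generator of `ℤ`. -/
def pencilGen : Fin n ⊕ Fin (n - 1) → Multiplicative ℤ × K
  | .inl ⟨0, _⟩ => (.ofAdd 1, sgBInvProd g (n - 1))
  | .inl ⟨t + 1, _⟩ => (1, sgBInvProd g t * sgB g t * (sgBInvProd g t)⁻¹)
  | .inr ⟨t, _⟩ => (1, sgBInvProd g t * (sgA g t)⁻¹ * (sgBInvProd g t)⁻¹)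

variable {g}

theorem npX_pencilGen_zero (hn : 1 ≤ n) :
    npX (pencilGen g) 0 = (.ofAdd 1, sgBInvProd g (n - 1)) :=
  natExtend_of_lt _ hn

theorem npX_pencilGen_succ {t : ℕ} (ht : t < n - 1) :
    npX (pencilGen g) (t + 1) = (1, sgBInvProd g t * sgB g t * (sgBInvProd g t)⁻¹) :=
  natExtend_of_lt _ (by omega)

theorem npγ_pencilGen {t : ℕ} (ht : t < n - 1) :
    npγ (pencilGen g) t = (1, sgBInvProd g t * (sgA g t)⁻¹ * (sgBInvProd g t)⁻¹) :=
  natExtend_of_lt _ ht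

theorem npW_pencilGen {k : ℕ} (hk : k ≤ n - 1) :
    npW (pencilGen g) k = (1, (sgBInvProd g k)⁻¹) := by
  rw [npW, prod_map_range_telescope (Q := fun k => (1, (sgBInvProd g k)⁻¹)) fun t ht => ?_]
  · simp [sgBInvProd]
  · rw [npX_pencilGen_succ (by omega), sgBInvProd_succ]
    ext <;> simp [mul_assoc]

theorem npC_pencilGen :
    npC (pencilGen g) (n - 1) = (1, sgRel g (n - 1) * (sgBInvProd g (n - 1))⁻¹) := by
  rw [npC, prod_map_range_telescope (Q := fun k => (1, sgRel g k * (sgBInvProd g k)⁻¹))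
    fun t ht => ?_]
  · simp [sgRel, sgBInvProd]
  · rw [npX_pencilGen_succ ht, npγ_pencilGen ht, sgRel_succ, sgBInvProd_succ]
    ext
    · simp
    · simp only [Prod.snd_mul, Prod.snd_inv]
      group

theorem npζ_pencilGen (hn : 1 ≤ n) : npζ (pencilGen g) = (.ofAdd 1, 1) := by
  rw [npζ, npX_pencilGen_zero hn, npW_pencilGen le_rfl]
  ext <;> simp

theorem lift_npRels_pencilGen (hn : 3 ≤ n) (hg : sgRel g (n - 1) = 1) :
    ∀ r ∈ npRels n hn, FreeGroup.lift (pencilGen g) r = 1 := by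
  have hζ (y : Multiplicative ℤ × K) : Commute (npζ (pencilGen g)) y := by
    rw [npζ_pencilGen (by omega)]
    exact (Commute.all _ _).prod (Commute.one_left _)
  refine (lift_npRels_eq_one_iff _ hn).mpr ⟨?_, fun _ => hζ _, fun _ => hζ _⟩
  rw [npC_pencilGen, npW_pencilGen le_rfl, hg, one_mul]

end PencilGen

section Isomorphism

variable {n : ℕ} (hn : 3 ≤ n)

local notation "og" => (PresentedGroup.of : Fin n ⊕ Fin (n - 1) → PresentedGroup (npRels n hn))

local notation "os" => (PresentedGroup.of : Fin (2 * n - 2) → PresentedGroup (surfaceRels n))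

theorem sgRel_of : sgRel os (n - 1) = 1 :=
  (lift_surfaceRels_eq_one_iff _).mp fun _ => PresentedGroup.lift_of_eq_one_of_mem

def ofSurface : PresentedGroup (surfaceRels n) →* PresentedGroup (npRels n hn) :=
  PresentedGroup.toGroup <| (lift_surfaceRels_eq_one_iff (surfaceGen og)).mpr <| by
    rw [sgRel_surfaceGen, npC_of_eq_npW hn, mul_inv_cancel]

def ofProd : Multiplicative ℤ × PresentedGroup (surfaceRels n) →* PresentedGroup (npRels n hn) :=
  (zpowersHom _ (npζ og)).noncommCoprod (ofSurface hn) fun _ _ =>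
    (commute_npζ_of hn _).zpow_left _

def toProd : PresentedGroup (npRels n hn) →* Multiplicative ℤ × PresentedGroup (surfaceRels n) :=
  PresentedGroup.toGroup (lift_npRels_pencilGen hn (sgRel_of (n := n)))

theorem ofSurface_comp_of : ⇑(ofSurface hn) ∘ os = surfaceGen og :=
  funext fun _ => PresentedGroup.toGroup.of _

theorem toProd_comp_of : ⇑(toProd hn) ∘ og = pencilGen os :=
  funext fun _ => PresentedGroup.toGroup.of _

theorem ofProd_apply (a : Multiplicative ℤ) (p : PresentedGroup (surfaceRels n)) :
    ofProd hn (a, p) = npζ og ^ a.toAdd * ofSurface hn p :=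
  rfl

theorem ofProd_comp_toProd : (ofProd hn).comp (toProd hn) = MonoidHom.id _ := by
  have hBInv {t : ℕ} (ht : t ≤ n - 1) : ofSurface hn (sgBInvProd os t) = (npW og t)⁻¹ := by
    rw [map_sgBInvProd, ofSurface_comp_of, sgBInvProd_surfaceGen ht]
  refine PresentedGroup.ext fun a => ?_
  rw [MonoidHom.comp_apply, MonoidHom.id_apply, ← Function.comp_apply (f := toProd hn),
    toProd_comp_of]
  rcases a with ⟨_ | t, hi⟩ | ⟨t, ht⟩
  · rw [pencilGen, ofProd_apply, hBInv le_rfl, ← npX_val og]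
    simp [npζ]
  · rw [pencilGen, ofProd_apply, ← npX_val og]
    simp only [toAdd_one, zpow_zero, one_mul, map_mul, map_inv, hBInv (show t ≤ n - 1 by omega),
      map_sgB, ofSurface_comp_of, sgB_surfaceGen (show t < n - 1 by omega)]
    group
  · rw [pencilGen, ofProd_apply, ← npγ_val og]
    simp only [toAdd_one, zpow_zero, one_mul, map_mul, map_inv, hBInv ht.le, map_sgA,
      ofSurface_comp_of, sgA_surfaceGen ht]
    group

theorem toProd_npζ : toProd hn (npζ og) = (.ofAdd 1, 1) := by
  rw [map_npζ, toProd_comp_of, npζ_pencilGen (by omega)]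

theorem toProd_comp_ofSurface : (toProd hn).comp (ofSurface hn) = MonoidHom.inr _ _ := by
  refine surfaceGroup_hom_ext (fun t ht => ?_) (fun t ht => ?_)
  · rw [MonoidHom.comp_apply, map_sgA, ofSurface_comp_of, sgA_surfaceGen ht]
    simp only [map_mul, map_inv, map_npW, map_npγ, toProd_comp_of, npW_pencilGen ht.le,
      npγ_pencilGen ht]
    ext <;> simp
  · rw [MonoidHom.comp_apply, map_sgB, ofSurface_comp_of, sgB_surfaceGen ht]
    simp only [map_mul, map_inv, map_npW, map_npX, toProd_comp_of, npW_pencilGen ht.le,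
      npX_pencilGen_succ ht]
    ext <;> simp [mul_assoc]

theorem toProd_comp_ofProd : (toProd hn).comp (ofProd hn) = MonoidHom.id _ := by
  refine MonoidHom.ext fun ⟨a, p⟩ => ?_
  rw [MonoidHom.comp_apply, ofProd_apply, map_mul, map_zpow, toProd_npζ, ← MonoidHom.comp_apply,
    toProd_comp_ofSurface]
  ext <;> simp

end Isomorphism

/-- For `n ≥ 3`, the group `G` presented with generators
`x_1, …, x_n, γ_2, …, γ_n` and relators `z ζ⁻¹`, `x_j γ_j z γ_j⁻¹ x_j⁻¹ ζ⁻¹`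
(`2 ≤ j ≤ n`) and `[z, x_j^{γ_j}]` (`2 ≤ j ≤ n`) — the fundamental group of the boundary
manifold of a near-pencil of `n+1` lines — is isomorphic to the direct product of `ℤ`
with the genus-`(n−1)` surface group `Π`. -/
theorem boundary_manifold_stmt8 (n : ℕ) (hn : 3 ≤ n) :
    Nonempty
      (PresentedGroup (npRels n hn) ≃*
        (Multiplicative ℤ × PresentedGroup (surfaceRels n))) :=
  ⟨MonoidHom.toMulEquiv (toProd hn) (ofProd hn) (ofProd_comp_toProd hn) (toProd_comp_ofProd hn)⟩
end BoundaryManifoldStmt8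
end

section
/- In the Laurent polynomial ring Λ = ℂ[t_1^{±1}, …, t_5^{±1}], let Δ_1 = [(t_1−1)(t_2−1)(t_3−1)(t_4−1)(t_5−1)(t_1t_2t_3t_4t_5−1)(t_3t_4t_5−1)]² and Δ_2 = [(t_1−1)(t_2−1)(t_3−1)(t_4−1)]²(t_5−1)³(t_1t_2t_3t_4t_5−1)(t_3t_4t_5−1)(t_1t_2t_5−1). Then there is no monomial isomorphism of Λ carrying Δ_1 to Δ_2 up to units: for every group automorphism σ of ℤ^5, with induced ℂ-algebra automorphism σ_* of Λ determined by σ_*(t^a) = t^{σ(a)} for a ∈ ℤ^5, and for every unit u of Λ (i.e., u = c·t^a with c ∈ ℂ^× and a ∈ ℤ^5), one has σ_*(Δ_1) ≠ u·Δ_2. -/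
/-- The Laurent polynomial ring `ℂ[t₁^{±1},…,t₅^{±1}]`. -/
abbrev LaurentRing5 := AddMonoidAlgebra ℂ (Fin 5 → ℤ)

/-- The monomial `t^a` in `ℂ[t₁^{±1},…,t₅^{±1}]`. -/
noncomputable abbrev lmon (a : Fin 5 → ℤ) : LaurentRing5 :=
  AddMonoidAlgebra.single a (1 : ℂ)

/-!
`Φ Δ₁` is a square for every ring automorphism `Φ`, whereas `u · Δ₂` is not: the element
`t₅ - 1` is prime in `Λ` and divides `u · Δ₂` exactly three times, an odd number. Primality of `t₅ - 1` comes
from the substitution `t₅ ↦ 1`, an endomorphism of the domain `Λ` that kills `t₅ - 1` and moves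
every `f` only by a multiple of `t₅ - 1`.
-/

theorem Prime.not_isSquare_pow_odd_mul {M : Type*} [CommMonoidWithZero M] [IsCancelMulZero M]
    {p y : M} (hp : Prime p) (hy : ¬ p ∣ y) (k : ℕ) : ¬ IsSquare (p ^ (2 * k + 1) * y) := by
  have hdvd {n : ℕ} {x : M} (hx : p ^ (n + 1) * y = x * x) : ∃ z, x = p * z :=
    hp.dvd_of_dvd_pow (n := 2) (sq x ▸ hx ▸ (dvd_pow_self p n.succ_ne_zero).mul_right y)
  induction k with
  | zero =>
    rintro ⟨x, hx⟩
    obtain ⟨z, rfl⟩ := hdvd hx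
    rw [mul_mul_mul_comm, mul_zero, zero_add, pow_one, mul_assoc] at hx
    exact hy ⟨z * z, mul_left_cancel₀ hp.ne_zero hx⟩
  | succ k ih =>
    rintro ⟨x, hx⟩
    obtain ⟨z, rfl⟩ := hdvd hx
    rw [mul_mul_mul_comm, ← sq, show 2 * (k + 1) + 1 = 2 + (2 * k + 1) by ring, pow_add,
      mul_assoc] at hx
    exact ih ⟨z, mul_left_cancel₀ (pow_ne_zero 2 hp.ne_zero) hx⟩

section RetractionModuloPrime

variable {R : Type*} [CommRing R] {F : Type*} [FunLike F R R] [RingHomClass F R R]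
  {φ : F} {p : R}

theorem map_eq_zero_of_dvd (hφp : φ p = 0) {f : R} (hf : p ∣ f) : φ f = 0 := by
  obtain ⟨g, rfl⟩ := hf
  rw [map_mul, hφp, zero_mul]

theorem prime_of_dvd_sub_map [IsDomain R] (hp : p ≠ 0) (hφp : φ p = 0)
    (hdvd : ∀ f, p ∣ f - φ f) : Prime p := by
  refine ⟨hp, fun hu => not_isUnit_zero (hφp ▸ hu.map φ), fun f g hfg => ?_⟩
  have hfg0 : φ f * φ g = 0 := by rw [← map_mul, map_eq_zero_of_dvd hφp hfg]
  refine (mul_eq_zero.mp hfg0).imp (fun hf => ?_) (fun hg => ?_)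
  · simpa [hf] using hdvd f
  · simpa [hg] using hdvd g

end RetractionModuloPrime

section EraseCoord

variable {ι : Type*} [DecidableEq ι] (i : ι)

def eraseCoord : (ι → ℤ) →+ (ι → ℤ) :=
  AddMonoidHom.id _ - (AddMonoidHom.single _ i).comp (Pi.evalAddMonoidHom _ i)

theorem eraseCoord_add_single (a : ι → ℤ) : eraseCoord i a + Pi.single i (a i) = a :=
  sub_add_cancel a _

theorem eraseCoord_apply_of_ne {j : ι} (hj : j ≠ i) (a : ι → ℤ) : eraseCoord i a j = a j := by
  simp [eraseCoord, hj]

theorem eraseCoord_single_one : eraseCoord i (Pi.single i 1) = 0 := by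
  simp [eraseCoord]

end EraseCoord

namespace AddMonoidAlgebra

variable {k : Type*} [CommRing k]

theorem single_sub_one_ne_zero [Nontrivial k] {G : Type*} [AddMonoid G] {a : G} (ha : a ≠ 0) :
    single a (1 : k) - 1 ≠ 0 := by
  rw [sub_ne_zero, one_def, Ne, single_left_inj one_ne_zero]
  exact ha

theorem single_sub_one_dvd_single_zsmul_sub_one {G : Type*} [AddCommGroup G] (g : G) (n : ℤ) :
    single g (1 : k) - 1 ∣ single (n • g) 1 - 1 := by
  have hstep : ∀ h : G, (single g (1 : k) - 1 ∣ single (h + g) 1 - 1 ↔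
      single g (1 : k) - 1 ∣ single h 1 - 1) := fun h => by
    have : single (h + g) (1 : k) - 1 = single h 1 * (single g 1 - 1) + (single h 1 - 1) := by
      rw [mul_sub_one, single_mul_single, one_mul, sub_add_sub_cancel]
    rw [this, dvd_add_right (dvd_mul_left _ _)]
  induction n using Int.induction_on with
  | zero => simp [one_def]
  | succ n ih => rwa [add_smul, one_smul, hstep]
  | pred n ih => rwa [← hstep, sub_smul, one_smul, sub_add_cancel]

variable {ι : Type*} [DecidableEq ι] (i : ι)

variable (k) in
noncomputable def substOne : AddMonoidAlgebra k (ι → ℤ) →ₐ[k] AddMonoidAlgebra k (ι → ℤ) :=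
  mapDomainAlgHom k k (eraseCoord i)

theorem substOne_single (a : ι → ℤ) (c : k) :
    substOne k i (single a c) = single (eraseCoord i a) c :=
  mapDomain_single

theorem substOne_single_sub_one : substOne k i (single (Pi.single i 1) 1 - 1) = 0 := by
  rw [map_sub, map_one, substOne_single, eraseCoord_single_one, one_def, sub_self]

theorem single_sub_one_dvd_sub_substOne (f : AddMonoidAlgebra k (ι → ℤ)) :
    single (Pi.single i 1) 1 - 1 ∣ f - substOne k i f := by
  induction f using induction_linear with
  | zero => simp
  | add f g hf hg => simpa only [map_add, add_sub_add_comm] using dvd_add hf hg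
  | single a c =>
    have hsplit : single a c = single (eraseCoord i a) c * single (a i • Pi.single i 1) 1 := by
      rw [single_mul_single, mul_one, ← Pi.single_smul, smul_eq_mul, mul_one,
        eraseCoord_add_single]
    rw [substOne_single, hsplit, ← mul_sub_one]
    exact (single_sub_one_dvd_single_zsmul_sub_one _ _).mul_left _

theorem prime_single_sub_one [IsDomain k] : Prime (single (Pi.single i 1 : ι → ℤ) (1 : k) - 1) :=
  prime_of_dvd_sub_map (φ := substOne k i)
    (single_sub_one_ne_zero (Pi.single_ne_zero_iff.mpr one_ne_zero)) (substOne_single_sub_one i)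
    (single_sub_one_dvd_sub_substOne i)

theorem substOne_single_sub_one_ne_zero [Nontrivial k] {a : ι → ℤ} (ha : ∃ j ≠ i, a j ≠ 0) :
    substOne k i (single a 1 - 1) ≠ 0 := by
  obtain ⟨j, hj, haj⟩ := ha
  rw [map_sub, map_one, substOne_single]
  exact single_sub_one_ne_zero fun h =>
    haj (by simpa [eraseCoord_apply_of_ne i hj] using congrFun h j)

end AddMonoidAlgebra

open AddMonoidAlgebra in
/-- Let
`Δ₁ = [(t₁−1)(t₂−1)(t₃−1)(t₄−1)(t₅−1)(t₁t₂t₃t₄t₅−1)(t₃t₄t₅−1)]²` and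
`Δ₂ = [(t₁−1)(t₂−1)(t₃−1)(t₄−1)]²(t₅−1)³(t₁t₂t₃t₄t₅−1)(t₃t₄t₅−1)(t₁t₂t₅−1)`.
For every automorphism `σ` of `ℤ⁵`, with induced algebra automorphism `Φ` of
`ℂ[t₁^{±1},…,t₅^{±1}]` determined by `Φ(t^a) = t^{σ(a)}`, and every unit `c·t^a`
(`c ∈ ℂ^×`), one has `Φ(Δ₁) ≠ c·t^a · Δ₂`. -/
theorem boundary_manifold_stmt10 :
    let e : Fin 5 → (Fin 5 → ℤ) := fun i => Pi.single i 1
    let Δ₁ : LaurentRing5 :=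
      ((lmon (e 0) - 1) * (lmon (e 1) - 1) * (lmon (e 2) - 1) * (lmon (e 3) - 1) *
        (lmon (e 4) - 1) * (lmon (e 0 + e 1 + e 2 + e 3 + e 4) - 1) *
        (lmon (e 2 + e 3 + e 4) - 1)) ^ 2
    let Δ₂ : LaurentRing5 :=
      ((lmon (e 0) - 1) * (lmon (e 1) - 1) * (lmon (e 2) - 1) * (lmon (e 3) - 1)) ^ 2 *
        (lmon (e 4) - 1) ^ 3 * (lmon (e 0 + e 1 + e 2 + e 3 + e 4) - 1) *
        (lmon (e 2 + e 3 + e 4) - 1) * (lmon (e 0 + e 1 + e 4) - 1)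
    ∀ (σ : (Fin 5 → ℤ) ≃+ (Fin 5 → ℤ)) (Φ : LaurentRing5 ≃ₐ[ℂ] LaurentRing5),
      (∀ a : Fin 5 → ℤ, Φ (lmon a) = lmon (σ a)) →
      ∀ (c : ℂ), c ≠ 0 → ∀ a : Fin 5 → ℤ,
        Φ Δ₁ ≠ AddMonoidAlgebra.single a c * Δ₂ := by
  intro e Δ₁ Δ₂ σ Φ _ c hc a hΦ
  set y : LaurentRing5 := single a c *
    (((lmon (e 0) - 1) * (lmon (e 1) - 1) * (lmon (e 2) - 1) * (lmon (e 3) - 1)) ^ 2 *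
      (lmon (e 0 + e 1 + e 2 + e 3 + e 4) - 1) * (lmon (e 2 + e 3 + e 4) - 1) *
      (lmon (e 0 + e 1 + e 4) - 1)) with hy
  have hΔ₂ : single a c * Δ₂ = (lmon (e 4) - 1) ^ (2 * 1 + 1) * y := by ring
  have hy_subst : substOne ℂ 4 y ≠ 0 := by
    simp only [hy, map_mul, map_pow, substOne_single]
    refine mul_ne_zero (by simpa using hc) (mul_ne_zero (mul_ne_zero (mul_ne_zero (pow_ne_zero _
      (mul_ne_zero (mul_ne_zero (mul_ne_zero ?_ ?_) ?_) ?_)) ?_) ?_) ?_) <;>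
    exact substOne_single_sub_one_ne_zero _ (by decide)
  have hsq : IsSquare (Φ Δ₁) := (IsSquare.sq _).map Φ
  rw [hΦ, hΔ₂] at hsq
  exact (prime_single_sub_one 4).not_isSquare_pow_odd_mul
    (fun hdvd => hy_subst (map_eq_zero_of_dvd (substOne_single_sub_one 4) hdvd)) 1 hsq
end
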